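/- arXiv:1302.3256 — 7 statements merged into one kernel-verified Lean document; each statement's English description precedes it below -/
import Mathlib

section
/- Let F = √(A^{2/m} + B) where A is a smooth positive function and B a smooth function on an open set of the tangent variables, both homogeneous of the appropriate degrees (A of degree m, B of degree 2 in y). Then F is locally dually flat (i.e., (F²)_{x^k y^l} y^k = 2 (F²)_{x^l}) if and only if A_{x^l} = (1/(2A))[ ((2/m) - 1) A₀ A_l + A A_{0l} + (m/2) A^{(2m-2)/m} (B_{0l} - 2 B_{x^l}) ], where A₀ = A_{x^i} y^i, A_{0l} = A_{x^k y^l} y^k, and B_{0l} = B_{x^k y^l} y^k. -/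
open BigOperators

/-- Partial derivative in the fiber variable `y^l`. -/
noncomputable def pdy {n : ℕ} (f : (Fin n → ℝ) → (Fin n → ℝ) → ℝ) (l : Fin n)
    (x y : Fin n → ℝ) : ℝ :=
  fderiv ℝ (f x) y (Pi.single l 1)

/-- Partial derivative in the base variable `x^l`. -/
noncomputable def pdx {n : ℕ} (f : (Fin n → ℝ) → (Fin n → ℝ) → ℝ) (l : Fin n)
    (x y : Fin n → ℝ) : ℝ :=
  fderiv ℝ (fun x' => f x' y) x (Pi.single l 1)

lemma diff_x {n : ℕ} {f : (Fin n → ℝ) → (Fin n → ℝ) → ℝ}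
    (hf : ContDiff ℝ (⊤ : ℕ∞) (Function.uncurry f)) (x y : Fin n → ℝ) :
    DifferentiableAt ℝ (fun x' => f x' y) x := by
  have h1 : DifferentiableAt ℝ (Function.uncurry f) (x, y) :=
    (hf.differentiable (by simp)) (x, y)
  exact (by have := h1.comp x ((differentiableAt_id (x := x) (𝕜 := ℝ)).prodMk (differentiableAt_const (x := x) (𝕜 := ℝ) y)); exact this)

lemma diff_y {n : ℕ} {f : (Fin n → ℝ) → (Fin n → ℝ) → ℝ}
    (hf : ContDiff ℝ (⊤ : ℕ∞) (Function.uncurry f)) (x y : Fin n → ℝ) :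
    DifferentiableAt ℝ (f x) y := by
  have h1 : DifferentiableAt ℝ (Function.uncurry f) (x, y) :=
    (hf.differentiable (by simp)) (x, y)
  exact h1.comp y ((differentiableAt_const x).prodMk differentiableAt_id)

lemma hasfd_x {n : ℕ} {f : (Fin n → ℝ) → (Fin n → ℝ) → ℝ}
    (hf : ContDiff ℝ (⊤ : ℕ∞) (Function.uncurry f)) (x y : Fin n → ℝ) :
    HasFDerivAt (fun x' => f x' y)
      ((fderiv ℝ (Function.uncurry f) (x, y)).comp (ContinuousLinearMap.inl ℝ _ _)) x := by
  have h1 : HasFDerivAt (Function.uncurry f) (fderiv ℝ (Function.uncurry f) (x, y)) (x, y) :=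
    ((hf.differentiable (by simp)) (x, y)).hasFDerivAt
  exact (by have := h1.comp x (hasFDerivAt_prodMk_left (𝕜 := ℝ) x y); exact this)

lemma pdx_eq {n : ℕ} {f : (Fin n → ℝ) → (Fin n → ℝ) → ℝ}
    (hf : ContDiff ℝ (⊤ : ℕ∞) (Function.uncurry f)) (k : Fin n) (x y : Fin n → ℝ) :
    pdx f k x y = fderiv ℝ (Function.uncurry f) (x, y) (Pi.single k 1, 0) := by
  rw [pdx, (hasfd_x hf x y).fderiv]
  rfl

lemma pdx_contDiff_y {n : ℕ} {f : (Fin n → ℝ) → (Fin n → ℝ) → ℝ}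
    (hf : ContDiff ℝ (⊤ : ℕ∞) (Function.uncurry f)) (k : Fin n) (x : Fin n → ℝ) :
    ContDiff ℝ 1 (fun y => pdx f k x y) := by
  have h1 : ContDiff ℝ 1 (fderiv ℝ (Function.uncurry f)) :=
    hf.fderiv_right (by exact WithTop.coe_le_coe.mpr le_top)
  have h3 : ContDiff ℝ 1 (fun y : Fin n → ℝ =>
      fderiv ℝ (Function.uncurry f) (x, y) (Pi.single k 1, 0)) :=
    (h1.comp ((contDiff_const.prodMk contDiff_id))).clm_apply contDiff_const
  have : (fun y => pdx f k x y) = (fun y : Fin n → ℝ =>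
      fderiv ℝ (Function.uncurry f) (x, y) (Pi.single k 1, 0)) := by
    ext y; exact pdx_eq hf k x y
  rw [this]; exact h3

lemma pdx_formula {n : ℕ} {A B : (Fin n → ℝ) → (Fin n → ℝ) → ℝ} {p : ℝ}
    (hA : ContDiff ℝ (⊤ : ℕ∞) (Function.uncurry A))
    (hB : ContDiff ℝ (⊤ : ℕ∞) (Function.uncurry B))
    (k : Fin n) (x y : Fin n → ℝ) (ha : A x y ≠ 0) :
    pdx (fun x' y' => A x' y' ^ p + B x' y') k x y
      = p * A x y ^ (p - 1) * pdx A k x y + pdx B k x y := by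
  have hdA : HasFDerivAt (fun x' => A x' y) (fderiv ℝ (fun x' => A x' y) x) x :=
    (diff_x hA x y).hasFDerivAt
  have hdB : HasFDerivAt (fun x' => B x' y) (fderiv ℝ (fun x' => B x' y) x) x :=
    (diff_x hB x y).hasFDerivAt
  have h1 := (hdA.rpow_const (p := p) (Or.inl ha)).add hdB
  have h2 : pdx (fun x' y' => A x' y' ^ p + B x' y') k x y
      = (((p * A x y ^ (p - 1)) • fderiv ℝ (fun x' => A x' y) x)
          + fderiv ℝ (fun x' => B x' y) x) (Pi.single k 1) := by
    rw [pdx, show (fun x' => A x' y ^ p + B x' y) = (fun x => A x y ^ p) + fun x' => B x' y from rfl, h1.fderiv]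
  rw [h2]
  simp [pdx, mul_assoc]

lemma pdypdx_formula {n : ℕ} {A B : (Fin n → ℝ) → (Fin n → ℝ) → ℝ} {p : ℝ}
    (hA : ContDiff ℝ (⊤ : ℕ∞) (Function.uncurry A))
    (hB : ContDiff ℝ (⊤ : ℕ∞) (Function.uncurry B))
    (hpos : ∀ x y, y ≠ 0 → 0 < A x y)
    (k l : Fin n) (x y : Fin n → ℝ) (hy : y ≠ 0) :
    pdy (pdx (fun x' y' => A x' y' ^ p + B x' y') k) l x y
      = p * (p - 1) * A x y ^ (p - 2) * pdy A l x y * pdx A k x y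
        + p * A x y ^ (p - 1) * pdy (pdx A k) l x y
        + pdy (pdx B k) l x y := by
  have ha : A x y ≠ 0 := (hpos x y hy).ne'
  set R : (Fin n → ℝ) → ℝ :=
    fun y' => p * A x y' ^ (p - 1) * pdx A k x y' + pdx B k x y' with hR
  have heq : (fun y' => pdx (fun x' y' => A x' y' ^ p + B x' y') k x y') =ᶠ[nhds y] R := by
    filter_upwards [eventually_ne_nhds hy] with y' hy'
    exact pdx_formula hA hB k x y' (hpos x y' hy').ne'
  have hdA : HasFDerivAt (A x) (fderiv ℝ (A x) y) y := (diff_y hA x y).hasFDerivAt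
  have hrpow := hdA.rpow_const (p := p - 1) (Or.inl ha)
  have hP : HasFDerivAt (fun y' => pdx A k x y') (fderiv ℝ (fun y' => pdx A k x y') y) y :=
    (((pdx_contDiff_y hA k x).differentiable one_ne_zero) y).hasFDerivAt
  have hQ : HasFDerivAt (fun y' => pdx B k x y') (fderiv ℝ (fun y' => pdx B k x y') y) y :=
    (((pdx_contDiff_y hB k x).differentiable one_ne_zero) y).hasFDerivAt
  have hprod := ((hrpow.const_mul p).mul hP).add hQ
  have hfd : fderiv ℝ R y =
      ((p * A x y ^ (p - 1)) • fderiv ℝ (fun y' => pdx A k x y') y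
        + pdx A k x y • ((p : ℝ) • ((p - 1) * A x y ^ (p - 1 - 1)) • fderiv ℝ (A x) y))
        + fderiv ℝ (fun y' => pdx B k x y') y := hprod.fderiv
  have hthis : pdy (pdx (fun x' y' => A x' y' ^ p + B x' y') k) l x y
      = fderiv ℝ R y (Pi.single l 1) := by
    rw [pdy, heq.fderiv_eq]
  rw [hthis, hfd]
  have h1 : pdy (pdx A k) l x y = fderiv ℝ (fun y' => pdx A k x y') y (Pi.single l 1) := rfl
  have h2 : pdy (pdx B k) l x y = fderiv ℝ (fun y' => pdx B k x y') y (Pi.single l 1) := rfl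
  have h3 : pdy A l x y = fderiv ℝ (A x) y (Pi.single l 1) := rfl
  simp only [ContinuousLinearMap.add_apply, ContinuousLinearMap.coe_smul',
    Pi.smul_apply, smul_eq_mul, ← h1, ← h2, ← h3]
  rw [show p - 1 - 1 = p - 2 by ring]
  ring

lemma alg (mR a q A0 Al SA SB PL QL : ℝ) (ha : a ≠ 0) (hq : q ≠ 0) (hm : mR ≠ 0) :
    ((2/mR) * ((2/mR) - 1) * (q/a^2) * Al * A0 + (2/mR) * (q/a) * SA + SB
       = 2 * ((2/mR) * (q/a) * PL + QL))
    ↔ (PL = (1/(2*a)) * (((2/mR) - 1) * A0 * Al + a * SA + (mR/2) * (a^2/q) * (SB - 2*QL))) := by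
  have hc : (2/mR) * (q/a) ≠ 0 := by positivity
  have hid : 2 * ((2/mR) * (q/a) *
        ((1/(2*a)) * (((2/mR) - 1) * A0 * Al + a * SA + (mR/2) * (a^2/q) * (SB - 2*QL))) + QL)
      = (2/mR) * ((2/mR) - 1) * (q/a^2) * Al * A0 + (2/mR) * (q/a) * SA + SB := by
    field_simp
    ring
  constructor
  · intro h
    have h2 : 2 * ((2/mR) * (q/a) * PL + QL) = 2 * ((2/mR) * (q/a) *
        ((1/(2*a)) * (((2/mR) - 1) * A0 * Al + a * SA + (mR/2) * (a^2/q) * (SB - 2*QL))) + QL) := by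
      rw [hid]; exact h.symm
    have h3 : (2/mR) * (q/a) * PL = (2/mR) * (q/a) *
        ((1/(2*a)) * (((2/mR) - 1) * A0 * Al + a * SA + (mR/2) * (a^2/q) * (SB - 2*QL))) := by
      linarith
    exact mul_left_cancel₀ hc h3
  · intro h
    rw [h, ← hid]

lemma sum_helper {n : ℕ} (y u v w : Fin n → ℝ) (c1 c2 : ℝ) :
    ∑ k, y k * (c1 * u k + c2 * v k + w k)
      = c1 * (∑ k, y k * u k) + c2 * (∑ k, y k * v k) + ∑ k, y k * w k := by
  simp only [Finset.mul_sum, ← Finset.sum_add_distrib]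
  apply Finset.sum_congr rfl
  intros
  ring


/-- Characterization of locally dually flat generalized m-th root metrics (Lemma 3.1):
`F = √(A^{2/m}+B)` is locally dually flat iff
`A_{x^l} = (1/(2A))[(2/m-1)A₀A_l + A A_{0l} + (m/2)A^{(2m-2)/m}(B_{0l} - 2B_{x^l})]`. -/
theorem dually_flat_generalized_mth_root {n m : ℕ} (hm : 2 ≤ m)
    (A B : (Fin n → ℝ) → (Fin n → ℝ) → ℝ)
    (hA : ContDiff ℝ (⊤ : ℕ∞) (Function.uncurry A))
    (hB : ContDiff ℝ (⊤ : ℕ∞) (Function.uncurry B))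
    (hAhom : ∀ (x : Fin n → ℝ) (t : ℝ) (y : Fin n → ℝ), A x (t • y) = t ^ m * A x y)
    (hBhom : ∀ (x : Fin n → ℝ) (t : ℝ) (y : Fin n → ℝ), B x (t • y) = t ^ 2 * B x y)
    (hpos : ∀ x y, y ≠ 0 → 0 < A x y) :
    (∀ x y, y ≠ 0 → ∀ l,
        ∑ k, y k * pdy (pdx (fun x' y' => A x' y' ^ ((2 : ℝ) / m) + B x' y') k) l x y
          = 2 * pdx (fun x' y' => A x' y' ^ ((2 : ℝ) / m) + B x' y') l x y)
    ↔ (∀ x y, y ≠ 0 → ∀ l,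
        pdx A l x y = (1 / (2 * A x y)) *
          (((2 / (m : ℝ)) - 1) * (∑ i, y i * pdx A i x y) * pdy A l x y
            + A x y * (∑ k, y k * pdy (pdx A k) l x y)
            + ((m : ℝ) / 2) * A x y ^ ((2 * (m : ℝ) - 2) / m) *
                ((∑ k, y k * pdy (pdx B k) l x y) - 2 * pdx B l x y))) := by
  have hm0 : (m : ℝ) ≠ 0 := Nat.cast_ne_zero.mpr (by omega)
  have key : ∀ x y, y ≠ 0 → ∀ l : Fin n,
      ((∑ k, y k * pdy (pdx (fun x' y' => A x' y' ^ ((2 : ℝ) / m) + B x' y') k) l x y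
          = 2 * pdx (fun x' y' => A x' y' ^ ((2 : ℝ) / m) + B x' y') l x y)
        ↔ (pdx A l x y = (1 / (2 * A x y)) *
          (((2 / (m : ℝ)) - 1) * (∑ i, y i * pdx A i x y) * pdy A l x y
            + A x y * (∑ k, y k * pdy (pdx A k) l x y)
            + ((m : ℝ) / 2) * A x y ^ ((2 * (m : ℝ) - 2) / m) *
                ((∑ k, y k * pdy (pdx B k) l x y) - 2 * pdx B l x y)))) := by
    intro x y hy l
    have ha0 : 0 < A x y := hpos x y hy
    have ha : A x y ≠ 0 := ha0.ne'
    set a := A x y with haa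
    set q := a ^ ((2 : ℝ) / m) with hqq
    have hq0 : 0 < q := Real.rpow_pos_of_pos ha0 _
    have hpow1 : a ^ ((2 : ℝ) / m - 1) = q / a := by
      rw [hqq, Real.rpow_sub ha0, Real.rpow_one]
    have hpow2 : a ^ ((2 : ℝ) / m - 2) = q / a ^ 2 := by
      rw [hqq, Real.rpow_sub ha0, Real.rpow_two]
    have hpow3 : a ^ ((2 * (m : ℝ) - 2) / m) = a ^ 2 / q := by
      rw [show (2 * (m : ℝ) - 2) / m = 2 - (2 : ℝ) / m by field_simp,
        Real.rpow_sub ha0, Real.rpow_two, hqq]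
    have hsum : ∑ k, y k * pdy (pdx (fun x' y' => A x' y' ^ ((2 : ℝ) / m) + B x' y') k) l x y
        = (2 / (m : ℝ)) * ((2 / (m : ℝ)) - 1) * (q / a ^ 2) * pdy A l x y
            * (∑ k, y k * pdx A k x y)
          + (2 / (m : ℝ)) * (q / a) * (∑ k, y k * pdy (pdx A k) l x y)
          + ∑ k, y k * pdy (pdx B k) l x y := by
      rw [Finset.sum_congr rfl (fun k _ => by
        rw [pdypdx_formula hA hB hpos k l x y hy, ← haa, hpow1, hpow2])]
      exact sum_helper y _ _ _ _ _
    have hrhs : pdx (fun x' y' => A x' y' ^ ((2 : ℝ) / m) + B x' y') l x y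
        = (2 / (m : ℝ)) * (q / a) * pdx A l x y + pdx B l x y := by
      rw [pdx_formula hA hB l x y ha, ← haa, hpow1]
    rw [hsum, hrhs, hpow3]
    exact alg (m : ℝ) a q (∑ i, y i * pdx A i x y) (pdy A l x y)
      (∑ k, y k * pdy (pdx A k) l x y) (∑ k, y k * pdy (pdx B k) l x y)
      (pdx A l x y) (pdx B l x y) ha hq0.ne' hm0
  exact ⟨fun h x y hy l => (key x y hy l).mp (h x y hy l),
    fun h x y hy l => (key x y hy l).mpr (h x y hy l)⟩
end

section
/- Let A be an irreducible homogeneous polynomial of degree m ≥ 3 in y over the field of rational functions in x, and suppose (2 - m) A₀ A_l = m A (2 A_{x^l} - A_{0l}) holds for all l, where A₀ = A_{x^i} y^i. Then there exists a 1-form θ = θ_l(x) y^l such that A₀ = θ A, and consequently A_{x^l} = (1/(3m))[ m A θ_l + 2 θ A_l ]. -/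
open BigOperators

namespace DuallyFlatAux

open MvPolynomial Filter Topology

variable {n m : ℕ}

lemma degree_one_single (d : Fin n →₀ ℕ) (hd : Finsupp.degree d = 1) :
    ∃ i, d = Finsupp.single i 1 := by
  have hd0 : d ≠ 0 := by
    intro h
    rw [h, map_zero] at hd
    exact one_ne_zero hd.symm
  obtain ⟨i, hi⟩ := Finsupp.ne_iff.mp hd0
  simp only [Finsupp.coe_zero, Pi.zero_apply] at hi
  have hi1 : d i = 1 := by
    have h1 : d i ≤ 1 := hd ▸ Finsupp.le_degree i d
    omega
  refine ⟨i, ?_⟩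
  ext j
  rcases eq_or_ne j i with rfl | hj
  · simp [hi1]
  · simp only [Finsupp.single_apply, if_neg (Ne.symm hj)]
    by_contra hdj
    have hjs : j ∈ d.support := Finsupp.mem_support_iff.mpr hdj
    have his : i ∈ d.support := Finsupp.mem_support_iff.mpr hi
    have hsub : ({i, j} : Finset (Fin n)) ⊆ d.support := by
      intro k hk
      simp only [Finset.mem_insert, Finset.mem_singleton] at hk
      rcases hk with rfl | rfl <;> assumption
    have := Finset.sum_le_sum_of_subset hsub (f := fun k => d k)
    rw [Finset.sum_pair (Ne.symm hj)] at this
    have : d i + d j ≤ 1 := le_trans this (le_of_eq hd)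
    omega

lemma hom_one_structure (f : MvPolynomial (Fin n) ℝ) (h : f.IsHomogeneous 1) :
    f = ∑ i, C (coeff (Finsupp.single i 1) f) * X i := by
  classical
  ext d
  rw [MvPolynomial.coeff_sum]
  by_cases hd : ∃ i, d = Finsupp.single i 1
  · obtain ⟨i, rfl⟩ := hd
    rw [Finset.sum_eq_single i]
    · simp [coeff_C_mul, coeff_X']
    · intro j _ hj
      rw [coeff_C_mul, coeff_X', if_neg, mul_zero]
      intro hEq
      exact hj ((Finsupp.single_left_inj one_ne_zero).mp hEq)
    · simp
  · have h1 : coeff d f = 0 := by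
      by_contra hc
      exact hd (degree_one_single d
        (by rw [Finsupp.degree_eq_weight_one]; exact h hc))
    rw [h1]
    refine (Finset.sum_eq_zero ?_).symm
    intro j _
    rw [coeff_C_mul, coeff_X', if_neg (by tauto), mul_zero]

lemma degree_eq_sum_univ (d : Fin n →₀ ℕ) : Finsupp.degree d = ∑ i, d i := by
  rw [Finsupp.degree]
  exact Finset.sum_subset (Finset.subset_univ _) (fun j _ hj => Finsupp.notMem_support_iff.mp hj)

lemma X_mul_pderiv_monomial (d : Fin n →₀ ℕ) (c : ℝ) (i : Fin n) :
    X i * pderiv i (monomial d c) = monomial d (c * d i) := by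
  rw [pderiv_monomial]
  by_cases hdi : d i = 0
  · simp [hdi]
  · rw [X, monomial_mul, one_mul, add_comm,
      tsub_add_cancel_of_le (Finsupp.single_le_iff.mpr (Nat.one_le_iff_ne_zero.mpr hdi))]

lemma euler_identity (p : MvPolynomial (Fin n) ℝ) (hp : p.IsHomogeneous m) :
    ∑ i, X i * pderiv i p = (m : MvPolynomial (Fin n) ℝ) * p := by
  conv_lhs => rw [← support_sum_monomial_coeff p]
  conv_rhs => rw [← support_sum_monomial_coeff p]
  rw [Finset.mul_sum]
  simp_rw [map_sum, Finset.mul_sum]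
  rw [Finset.sum_comm]
  apply Finset.sum_congr rfl
  intro d hd
  simp_rw [X_mul_pderiv_monomial]
  rw [← map_sum (monomial d), ← Finset.mul_sum]
  have hdeg : ∑ i, d i = m := by
    rw [← degree_eq_sum_univ, Finsupp.degree_eq_weight_one]
    exact hp (mem_support_iff.mp hd)
  have hdeg' : (∑ i, (d i : ℝ)) = (m : ℝ) := by exact_mod_cast hdeg
  rw [hdeg', show ((m : MvPolynomial (Fin n) ℝ)) = C (m : ℝ) by push_cast; rfl, C_mul_monomial,
    mul_comm]

lemma pderiv_isHomogeneous (p : MvPolynomial (Fin n) ℝ) (hp : p.IsHomogeneous m) (i : Fin n) :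
    (pderiv i p).IsHomogeneous (m - 1) := by
  conv => enter [1]; rw [← support_sum_monomial_coeff p]
  rw [map_sum]
  apply MvPolynomial.IsHomogeneous.sum
  intro d hd
  rw [pderiv_monomial]
  by_cases hdi : d i = 0
  · rw [hdi]
    norm_num
    exact isHomogeneous_zero _ _ _
  · apply isHomogeneous_monomial
    have hdeg : Finsupp.degree d = m := by
      rw [Finsupp.degree_eq_weight_one]
      exact hp (mem_support_iff.mp hd)
    rw [degree_eq_sum_univ] at hdeg ⊢
    rw [← Finset.sum_erase_add _ _ (Finset.mem_univ i)] at hdeg ⊢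
    have he : ∀ j ∈ Finset.univ.erase i, ((d - Finsupp.single i 1) : Fin n →₀ ℕ) j = d j := by
      intro j hj
      rw [Finsupp.tsub_apply, Finsupp.single_apply, if_neg (Ne.symm (Finset.mem_erase.mp hj).1)]
      rfl
    rw [Finset.sum_congr rfl he, Finsupp.tsub_apply, Finsupp.single_apply, if_pos rfl]
    have h1 : 1 ≤ d i := Nat.one_le_iff_ne_zero.mpr hdi
    have hdeg2 : (Finset.univ.erase i).sum ⇑d + d i = m := hdeg
    omega

lemma hasFDerivAt_mv_eval (p : MvPolynomial (Fin n) ℝ) (y : Fin n → ℝ) :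
    HasFDerivAt (fun z : Fin n → ℝ => eval z p)
      (∑ i, eval y (pderiv i p) • (ContinuousLinearMap.proj i :
        (Fin n → ℝ) →L[ℝ] ℝ)) y := by
  induction p using MvPolynomial.induction_on with
  | C a =>
      simp only [eval_C, pderiv_C, map_zero, zero_smul, Finset.sum_const_zero]
      exact hasFDerivAt_const a y
  | add p q hp hq =>
      have := hp.add hq
      simp only [eval_add] at this ⊢
      refine this.congr_fderiv ?_
      rw [← Finset.sum_add_distrib]
      congr 1
      funext i
      rw [map_add, eval_add, add_smul]
  | mul_X p i hp =>
      have hXi : HasFDerivAt (fun z : Fin n → ℝ => z i)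
          (ContinuousLinearMap.proj i : (Fin n → ℝ) →L[ℝ] ℝ) y :=
        (ContinuousLinearMap.proj i : (Fin n → ℝ) →L[ℝ] ℝ).hasFDerivAt
      have hmul := hp.mul hXi
      simp only [eval_mul, eval_X] at hmul ⊢
      refine hmul.congr_fderiv ?_
      ext v
      simp only [ContinuousLinearMap.coe_sum', Finset.sum_apply,
        ContinuousLinearMap.coe_smul', Pi.smul_apply, ContinuousLinearMap.proj_apply,
        smul_eq_mul, ContinuousLinearMap.add_apply]
      have hterm : ∀ j : Fin n, eval y (pderiv j (p * X i)) * v j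
          = eval y (pderiv j p) * y i * v j
            + (if j = i then eval y p else 0) * v j := by
        intro j
        rw [pderiv_mul, eval_add, eval_mul, eval_mul, eval_X, pderiv_X]
        rcases eq_or_ne j i with rfl | hj
        · simp [add_mul]
        · simp [Pi.single_apply, hj, add_mul]
      rw [Finset.sum_congr rfl (fun j _ => hterm j), Finset.sum_add_distrib]
      have h2 : ∑ x : Fin n, (if x = i then eval y p else 0) * v x = eval y p * v i := by
        rw [Finset.sum_congr rfl (fun j _ => by rw [ite_mul, zero_mul])]
        simp [Finset.sum_ite_eq']
      have h3 : ∑ x : Fin n, eval y (pderiv x p) * y i * v x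
          = y i * ∑ x : Fin n, eval y (pderiv x p) * v x := by
        rw [Finset.mul_sum]; exact Finset.sum_congr rfl (fun j _ => by ring)
      rw [h2, h3]; ring

lemma fderiv_mv_eval (p : MvPolynomial (Fin n) ℝ) (y : Fin n → ℝ) (l : Fin n) :
    fderiv ℝ (fun z : Fin n → ℝ => eval z p) y (Pi.single l 1) = eval y (pderiv l p) := by
  rw [(hasFDerivAt_mv_eval p y).fderiv]
  simp only [ContinuousLinearMap.coe_sum', Finset.sum_apply,
    ContinuousLinearMap.coe_smul', Pi.smul_apply, ContinuousLinearMap.proj_apply,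
    smul_eq_mul, Pi.single_apply]
  rw [Finset.sum_congr rfl (fun j _ => by rw [mul_ite, mul_one, mul_zero])]
  rw [Finset.sum_ite_eq' Finset.univ l (fun j => eval y (pderiv j p))]
  simp

/-- The evaluation linear map. -/
noncomputable def evalL (n : ℕ) : MvPolynomial (Fin n) ℝ →ₗ[ℝ] ((Fin n → ℝ) → ℝ) where
  toFun p := fun y => eval y p
  map_add' p q := funext fun y => by simp
  map_smul' c p := funext fun y => by simp [smul_eval]

lemma pdx_poly (A : (Fin n → ℝ) → (Fin n → ℝ) → ℝ)
    (hA : ContDiff ℝ (⊤ : ℕ∞) (Function.uncurry A))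
    (hpoly : ∀ x, ∃ p : MvPolynomial (Fin n) ℝ, Irreducible p ∧ p.IsHomogeneous m ∧
      ∀ y, A x y = MvPolynomial.eval y p)
    (x : Fin n → ℝ) (k : Fin n) :
    ∃ q : MvPolynomial (Fin n) ℝ, q.IsHomogeneous m ∧ ∀ y, pdx A k x y = eval y q := by
  classical
  set M : Submodule ℝ ((Fin n → ℝ) → ℝ) :=
    Submodule.map (evalL n) (homogeneousSubmodule (Fin n) ℝ m) with hM
  haveI hfd1 : FiniteDimensional ℝ (homogeneousSubmodule (Fin n) ℝ m) :=
    Submodule.finiteDimensional_of_le (S₂ := restrictTotalDegree (Fin n) ℝ m)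
      (fun p hp => (mem_restrictTotalDegree _ _ _).mpr
        (MvPolynomial.IsHomogeneous.totalDegree_le hp))
  haveI hfd : FiniteDimensional ℝ M :=
    Module.Finite.iff_fg.mpr ((Module.Finite.iff_fg.mp hfd1).map (evalL n))
  have hclosed : IsClosed (M : Set ((Fin n → ℝ) → ℝ)) := M.closed_of_finiteDimensional
  set e : Fin n → ℝ := Pi.single k 1 with he
  set F : ℝ → ((Fin n → ℝ) → ℝ) := fun t y => (A (x + t • e) y - A x y) / t with hF
  have hdiffA : ∀ (y : Fin n → ℝ) (x₀ : Fin n → ℝ),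
      DifferentiableAt ℝ (fun x' => A x' y) x₀ := by
    intro y x₀
    have h1 : Differentiable ℝ (Function.uncurry A) := hA.differentiable (by simp)
    have hg : DifferentiableAt ℝ (fun x' : Fin n → ℝ => (x', y)) x₀ :=
      differentiableAt_id.prodMk (differentiableAt_const y)
    exact (h1 (x₀, y)).comp x₀ hg
  have htend : Tendsto F (𝓝[≠] (0:ℝ)) (𝓝 (fun y => pdx A k x y)) := by
    rw [tendsto_pi_nhds]
    intro y
    have h0 : x + (0:ℝ) • e = x := by simp
    have hd' : HasFDerivAt (fun x' => A x' y) (fderiv ℝ (fun x' => A x' y) x)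
        (x + (0:ℝ) • e) := by rw [h0]; exact (hdiffA y x).hasFDerivAt
    have hline : HasDerivAt (fun t : ℝ => x + t • e) e 0 := by
      simpa using ((hasDerivAt_id (0:ℝ)).smul_const e).const_add x
    have hcomp : HasDerivAt (fun t : ℝ => A (x + t • e) y) (pdx A k x y) 0 :=
      by have := hd'.comp_hasDerivAt 0 hline; exact this
    have hslope := hasDerivAt_iff_tendsto_slope.mp hcomp
    refine hslope.congr ?_
    intro t
    rw [slope_def_field]
    simp only [sub_zero, h0]
    rfl
  have hmem : ∀ᶠ t in 𝓝[≠] (0:ℝ), F t ∈ M := by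
    filter_upwards [self_mem_nhdsWithin] with t ht
    obtain ⟨p', _, hp'hom, hp'eval⟩ := hpoly (x + t • e)
    obtain ⟨p, _, hphom, hpeval⟩ := hpoly x
    refine Submodule.mem_map.mpr ⟨t⁻¹ • (p' - p),
      Submodule.smul_mem _ _ (Submodule.sub_mem _ hp'hom hphom), ?_⟩
    funext y
    show eval y (t⁻¹ • (p' - p)) = (A (x + t • e) y - A x y) / t
    rw [smul_eval, map_sub, ← hp'eval, ← hpeval, div_eq_inv_mul]
  have hfin : (fun y => pdx A k x y) ∈ M := hclosed.mem_of_tendsto htend hmem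
  obtain ⟨q, hq, hLq⟩ := Submodule.mem_map.mp hfin
  exact ⟨q, hq, fun y => (congrFun hLq y).symm⟩

lemma not_dvd_pderiv (hm : 3 ≤ m) (p : MvPolynomial (Fin n) ℝ) (hphom : p.IsHomogeneous m)
    (l : Fin n) (hne : pderiv l p ≠ 0) : ¬ p ∣ pderiv l p := by
  rintro ⟨s, hs⟩
  have hDhom : (pderiv l p).IsHomogeneous (m - 1) := pderiv_isHomogeneous p hphom l
  have hD : homogeneousComponent (m - 1) (pderiv l p) = pderiv l p := by
    rw [homogeneousComponent_of_mem hDhom, if_pos rfl]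
  have hexp : p * s = ∑ d ∈ Finset.range (s.totalDegree + 1), p * homogeneousComponent d s := by
    rw [← Finset.mul_sum, sum_homogeneousComponent]
  have h0 : homogeneousComponent (m - 1) (p * s) = 0 := by
    rw [hexp, map_sum]
    apply Finset.sum_eq_zero
    intro d _
    rw [homogeneousComponent_of_mem (hphom.mul (homogeneousComponent_isHomogeneous d s)),
      if_neg (by omega)]
  exact hne (by rw [← hD, hs, h0])

lemma hom_cofactor (p B t : MvPolynomial (Fin n) ℝ) (hphom : p.IsHomogeneous m)
    (hBhom : B.IsHomogeneous (m + 1)) (h : B = p * t) :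
    B = p * homogeneousComponent 1 t := by
  have hBc : homogeneousComponent (m + 1) B = B := by
    rw [homogeneousComponent_of_mem hBhom, if_pos rfl]
  have hexp : p * t = ∑ d ∈ Finset.range (t.totalDegree + 1), p * homogeneousComponent d t := by
    rw [← Finset.mul_sum, sum_homogeneousComponent]
  have hcomp : homogeneousComponent (m + 1) (p * t)
      = ∑ d ∈ Finset.range (t.totalDegree + 1),
        if d = 1 then p * homogeneousComponent d t else 0 := by
    rw [hexp, map_sum]
    apply Finset.sum_congr rfl
    intro d _
    rw [homogeneousComponent_of_mem (hphom.mul (homogeneousComponent_isHomogeneous d t))]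
    by_cases hd : d = 1
    · subst hd; simp
    · rw [if_neg (by omega), if_neg hd]
  rw [Finset.sum_ite_eq' (Finset.range (t.totalDegree + 1)) 1
    (fun d => p * homogeneousComponent d t)] at hcomp
  by_cases h1 : 1 ∈ Finset.range (t.totalDegree + 1)
  · rw [if_pos h1] at hcomp
    rw [← hBc, h, hcomp]
  · rw [if_neg h1] at hcomp
    have htd : t.totalDegree = 0 := by
      simp only [Finset.mem_range] at h1; omega
    have hθ0 : homogeneousComponent 1 t = 0 :=
      homogeneousComponent_eq_zero 1 t (by omega)
    rw [hθ0, mul_zero, ← hBc, h, hcomp]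

lemma key (hm : 3 ≤ m)
    (A : (Fin n → ℝ) → (Fin n → ℝ) → ℝ)
    (hA : ContDiff ℝ (⊤ : ℕ∞) (Function.uncurry A))
    (hpoly : ∀ x, ∃ p : MvPolynomial (Fin n) ℝ, Irreducible p ∧ p.IsHomogeneous m ∧
      ∀ y, A x y = MvPolynomial.eval y p)
    (heq : ∀ x y l,
      (2 - (m : ℝ)) * (∑ i, y i * pdx A i x y) * pdy A l x y
        = (m : ℝ) * A x y * (2 * pdx A l x y - ∑ k, y k * pdy (pdx A k) l x y))
    (x : Fin n → ℝ) :
    ∃ θx : Fin n → ℝ,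
      (∀ y, ∑ i, y i * pdx A i x y = (∑ l, θx l * y l) * A x y) ∧
      (∀ y l, pdx A l x y =
        (1 / (3 * (m : ℝ))) * ((m : ℝ) * A x y * θx l
          + 2 * (∑ j, θx j * y j) * pdy A l x y)) := by
  classical
  obtain ⟨p, hpirr, hphom, hpeval⟩ := hpoly x
  have hp0 : p ≠ 0 := hpirr.ne_zero
  choose q hqhom hqeval using fun k => pdx_poly A hA hpoly x k
  have hpdy : ∀ l y, pdy A l x y = eval y (pderiv l p) := by
    intro l y
    have hAx : A x = fun y' => eval y' p := funext hpeval
    rw [pdy, hAx, fderiv_mv_eval]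
  have hpdyq : ∀ k l y, pdy (pdx A k) l x y = eval y (pderiv l (q k)) := by
    intro k l y
    have hAx : pdx A k x = fun y' => eval y' (q k) := funext (hqeval k)
    rw [pdy, hAx, fderiv_mv_eval]
  set B : MvPolynomial (Fin n) ℝ := ∑ k, X k * q k with hB
  have hBhom : B.IsHomogeneous (m + 1) := by
    apply MvPolynomial.IsHomogeneous.sum
    intro k _
    simpa [add_comm] using (isHomogeneous_X ℝ k).mul (hqhom k)
  have hBeval : ∀ y, eval y B = ∑ i, y i * pdx A i x y := by
    intro y
    rw [hB, map_sum]
    apply Finset.sum_congr rfl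
    intro k _
    rw [eval_mul, eval_X, ← hqeval k y]
  have hEl : ∀ l, (2 - (m : MvPolynomial (Fin n) ℝ)) * (B * pderiv l p)
      = (m : MvPolynomial (Fin n) ℝ) * (p * (2 * q l - ∑ k, X k * pderiv l (q k))) := by
    intro l
    apply MvPolynomial.funext
    intro y
    have h := heq x y l
    simp only [eval_mul, eval_sub, map_sum, eval_X, map_natCast, map_ofNat]
    rw [hBeval y, ← hpeval y, ← hpdy l y, ← hqeval l y]
    have hS : ∑ k, y k * pdy (pdx A k) l x y = ∑ k, y k * eval y (pderiv l (q k)) :=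
      Finset.sum_congr rfl (fun k _ => by rw [hpdyq k l y])
    rw [← hS]
    linear_combination h
  have hjex : ∃ j, pderiv j p ≠ 0 := by
    by_contra hall
    push_neg at hall
    have heu := euler_identity p hphom
    simp only [hall, mul_zero, Finset.sum_const_zero] at heu
    have hmne : (m : MvPolynomial (Fin n) ℝ) ≠ 0 := by
      rw [show ((m : MvPolynomial (Fin n) ℝ)) = C (m : ℝ) by push_cast; rfl, Ne, C_eq_zero]
      exact_mod_cast (by omega : m ≠ 0)
    exact hp0 ((mul_eq_zero.mp heu.symm).resolve_left hmne)
  have hprime : Prime p := UniqueFactorizationMonoid.irreducible_iff_prime.mp hpirr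
  obtain ⟨j, hj⟩ := hjex
  have h2m : (2 - (m : ℝ)) ≠ 0 := by
    have h3 : (3 : ℝ) ≤ (m : ℝ) := by exact_mod_cast hm
    intro hc; linarith
  have hcC : (C (2 - (m : ℝ)) : MvPolynomial (Fin n) ℝ)
      = 2 - (m : MvPolynomial (Fin n) ℝ) := by
    rw [map_sub, map_natCast]
    congr 1
  have hdvdBD : p ∣ B * pderiv j p := by
    refine ⟨C ((2 - (m : ℝ))⁻¹ * m) * (2 * q j - ∑ k, X k * pderiv j (q k)), ?_⟩
    apply mul_left_cancel₀ (a := C (2 - (m : ℝ))) (by rwa [Ne, C_eq_zero])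
    have hmulC : C (2 - (m : ℝ)) * (p * (C ((2 - (m : ℝ))⁻¹ * m) *
        (2 * q j - ∑ k, X k * pderiv j (q k))))
        = (C (2 - (m : ℝ)) * C ((2 - (m : ℝ))⁻¹ * m)) *
          (p * (2 * q j - ∑ k, X k * pderiv j (q k))) := by ring
    rw [hmulC, ← map_mul, show (2 - (m : ℝ)) * ((2 - (m : ℝ))⁻¹ * m) = (m : ℝ) by
      field_simp, map_natCast, hcC, hEl j]
  have hdvdB : p ∣ B :=
    (hprime.2.2 _ _ hdvdBD).resolve_right (fun hdd => not_dvd_pderiv hm p hphom j hj hdd)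
  obtain ⟨t, ht⟩ := hdvdB
  set θp : MvPolynomial (Fin n) ℝ := homogeneousComponent 1 t with hθp
  have hBθ : B = p * θp := hom_cofactor p B t hphom hBhom ht
  set θx : Fin n → ℝ := fun l => coeff (Finsupp.single l 1) θp with hθx
  have hθstruct : θp = ∑ i, C (θx i) * X i :=
    hom_one_structure θp (homogeneousComponent_isHomogeneous 1 t)
  have hθeval : ∀ y, eval y θp = ∑ l, θx l * y l := by
    intro y
    rw [hθstruct, map_sum]
    apply Finset.sum_congr rfl
    intro l _
    rw [eval_mul, eval_C, eval_X]
  have hθpd : ∀ l, pderiv l θp = C (θx l) := by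
    intro l
    rw [hθstruct, map_sum]
    rw [Finset.sum_congr rfl (fun i _ => by rw [pderiv_C_mul, pderiv_X])]
    simp [Pi.single_apply, mul_ite, Finset.sum_ite_eq']
  have hc1 : ∀ y, ∑ i, y i * pdx A i x y = (∑ l, θx l * y l) * A x y := by
    intro y
    rw [← hBeval y, hBθ, eval_mul, hθeval, hpeval y]
    ring
  have hpdB : ∀ l, pderiv l B = q l + ∑ k, X k * pderiv l (q k) := by
    intro l
    rw [hB, map_sum]
    rw [Finset.sum_congr rfl (fun k _ => by rw [pderiv_mul, pderiv_X])]
    rw [Finset.sum_add_distrib]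
    congr 1
    rw [Finset.sum_congr rfl (fun k _ => by rw [Pi.single_apply, ite_mul, one_mul, zero_mul])]
    simp [Finset.sum_ite_eq']
  have hstar : ∀ l, q l + ∑ k, X k * pderiv l (q k) = pderiv l p * θp + p * C (θx l) := by
    intro l
    rw [← hpdB l, hBθ, pderiv_mul, hθpd l]
  have hcore : ∀ l, p * ((3 * (m : MvPolynomial (Fin n) ℝ)) * q l)
      = p * ((m : MvPolynomial (Fin n) ℝ) * C (θx l) * p + 2 * (θp * pderiv l p)) := by
    intro l
    linear_combination (-(1 : MvPolynomial (Fin n) ℝ)) * hEl l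
      + (2 - (m : MvPolynomial (Fin n) ℝ)) * pderiv l p * hBθ
      + (m : MvPolynomial (Fin n) ℝ) * p * hstar l
  have hcanc : ∀ l, (3 * (m : MvPolynomial (Fin n) ℝ)) * q l
      = (m : MvPolynomial (Fin n) ℝ) * C (θx l) * p + 2 * (θp * pderiv l p) :=
    fun l => mul_left_cancel₀ hp0 (hcore l)
  have hc2 : ∀ y l, pdx A l x y =
      (1 / (3 * (m : ℝ))) * ((m : ℝ) * A x y * θx l
        + 2 * (∑ j', θx j' * y j') * pdy A l x y) := by
    intro y l
    have h := congrArg (eval y) (hcanc l)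
    simp only [eval_mul, eval_add, map_natCast, eval_C, map_ofNat] at h
    rw [← hqeval l y, ← hpeval y, hθeval y, ← hpdy l y] at h
    have h3m : (3 * (m : ℝ)) ≠ 0 := by
      have : (3 : ℝ) ≤ (m : ℝ) := by exact_mod_cast hm
      positivity
    field_simp
    linear_combination h
  exact ⟨θx, hc1, hc2⟩

end DuallyFlatAux

/-- If `A` is (for each `x`) an irreducible degree-`m` homogeneous polynomial in `y`
(`m ≥ 3`) satisfying `(2-m)A₀A_l = mA(2A_{x^l} - A_{0l})`, then there is a 1-form
`θ = θ_l(x)y^l` with `A₀ = θA`, and consequently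
`A_{x^l} = (1/(3m))[mAθ_l + 2θA_l]`. -/
theorem dually_flat_theta_form {n m : ℕ} (hm : 3 ≤ m)
    (A : (Fin n → ℝ) → (Fin n → ℝ) → ℝ)
    (hA : ContDiff ℝ (⊤ : ℕ∞) (Function.uncurry A))
    (hpoly : ∀ x, ∃ p : MvPolynomial (Fin n) ℝ, Irreducible p ∧ p.IsHomogeneous m ∧
      ∀ y, A x y = MvPolynomial.eval y p)
    (heq : ∀ x y l,
      (2 - (m : ℝ)) * (∑ i, y i * pdx A i x y) * pdy A l x y
        = (m : ℝ) * A x y * (2 * pdx A l x y - ∑ k, y k * pdy (pdx A k) l x y)) :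
    ∃ θ : (Fin n → ℝ) → Fin n → ℝ,
      (∀ x y, ∑ i, y i * pdx A i x y = (∑ l, θ x l * y l) * A x y) ∧
      (∀ x y l, pdx A l x y =
        (1 / (3 * (m : ℝ))) * ((m : ℝ) * A x y * θ x l
          + 2 * (∑ j, θ x j * y j) * pdy A l x y)) := by
  choose θ hθ1 hθ2 using fun x => DuallyFlatAux.key hm A hA hpoly heq x
  exact ⟨θ, fun x y => hθ1 x y, fun x y l => hθ2 x y l⟩
end

section
/- Let F = A^{1/m} be an m-th root metric. Then F is locally dually flat (i.e., (F²)_{x^k y^l} y^k = 2(F²)_{x^l}) if and only if A_{x^l} = (1/(2A)) [ ((2/m) - 1) A_l A₀ + A A_{0l} ] for all l. -/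
open BigOperators

section Aux

variable {n : ℕ} {A : (Fin n → ℝ) → (Fin n → ℝ) → ℝ}

lemma aux_hasFDerivAt_fst (hA : ContDiff ℝ (⊤ : ℕ∞) (Function.uncurry A)) (x y : Fin n → ℝ) :
    HasFDerivAt (fun x' => A x' y)
      ((fderiv ℝ (Function.uncurry A) (x, y)).comp (ContinuousLinearMap.inl ℝ _ _)) x := by
  have := ((hA.differentiable (by simp) (x, y)).hasFDerivAt).comp x (hasFDerivAt_prodMk_left (𝕜 := ℝ) x y)
  exact this

lemma aux_hasFDerivAt_snd (hA : ContDiff ℝ (⊤ : ℕ∞) (Function.uncurry A)) (x y : Fin n → ℝ) :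
    HasFDerivAt (A x)
      ((fderiv ℝ (Function.uncurry A) (x, y)).comp (ContinuousLinearMap.inr ℝ _ _)) y :=
  ((hA.differentiable (by simp) (x, y)).hasFDerivAt).comp y (hasFDerivAt_prodMk_right x y)

lemma aux_pdx_eq (hA : ContDiff ℝ (⊤ : ℕ∞) (Function.uncurry A)) (k : Fin n) (x y : Fin n → ℝ) :
    pdx A k x y = fderiv ℝ (Function.uncurry A) (x, y) (Pi.single k 1, 0) := by
  rw [pdx, (aux_hasFDerivAt_fst hA x y).fderiv]
  rfl

lemma aux_q_diff (hA : ContDiff ℝ (⊤ : ℕ∞) (Function.uncurry A)) (k : Fin n) (x y : Fin n → ℝ) :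
    DifferentiableAt ℝ (fun y' => pdx A k x y') y := by
  have hG : ContDiff ℝ (⊤ : ℕ∞)
      (fun p : (Fin n → ℝ) × (Fin n → ℝ) =>
        fderiv ℝ (Function.uncurry A) p (Pi.single k 1, (0 : Fin n → ℝ))) :=
    (hA.fderiv_right (by simp)).clm_apply contDiff_const
  have heq : (fun y' => pdx A k x y')
      = fun y' => fderiv ℝ (Function.uncurry A) (x, y') (Pi.single k 1, (0 : Fin n → ℝ)) :=
    funext fun y' => aux_pdx_eq hA k x y'
  rw [heq]
  exact (hG.differentiable (by simp) _).comp y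
    (DifferentiableAt.prodMk (differentiableAt_const x) differentiableAt_id)

/-- first derivative formula for `A^c` in the base variable, valid where `A > 0`. -/
lemma aux_pdx_rpow (hA : ContDiff ℝ (⊤ : ℕ∞) (Function.uncurry A))
    (hpos : ∀ x y, y ≠ 0 → 0 < A x y) (c : ℝ) (k : Fin n) (x y : Fin n → ℝ) (hy : y ≠ 0) :
    pdx (fun x' y' => A x' y' ^ c) k x y = c * A x y ^ (c - 1) * pdx A k x y := by
  have hfd := aux_hasFDerivAt_fst hA x y
  have hd : HasFDerivAt (fun x' => A x' y ^ c)
      ((c * A x y ^ (c - 1)) •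
        ((fderiv ℝ (Function.uncurry A) (x, y)).comp (ContinuousLinearMap.inl ℝ _ _))) x := by
    have := (Real.hasDerivAt_rpow_const (x := A x y) (p := c)
      (Or.inl (hpos x y hy).ne')).comp_hasFDerivAt x hfd
    exact this
  rw [pdx, hd.fderiv]
  simp only [ContinuousLinearMap.coe_smul', Pi.smul_apply, smul_eq_mul]
  rw [pdx, hfd.fderiv]

/-- second derivative formula: `∂/∂y^l` of `pdx (A^c) k`, at points with `y ≠ 0`. -/
lemma aux_pdy_pdx_rpow (hA : ContDiff ℝ (⊤ : ℕ∞) (Function.uncurry A))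
    (hpos : ∀ x y, y ≠ 0 → 0 < A x y) (c : ℝ) (k l : Fin n) (x y : Fin n → ℝ) (hy : y ≠ 0) :
    pdy (pdx (fun x' y' => A x' y' ^ c) k) l x y
      = c * (c - 1) * A x y ^ (c - 1 - 1) * pdy A l x y * pdx A k x y
        + c * A x y ^ (c - 1) * pdy (pdx A k) l x y := by
  have hev : (fun y' => pdx (fun x' y' => A x' y' ^ c) k x y')
      =ᶠ[nhds y] fun y' => c * (A x y' ^ (c - 1) * pdx A k x y') := by
    filter_upwards [isOpen_compl_singleton.eventually_mem (by simpa using hy :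
        y ∈ ({0}ᶜ : Set (Fin n → ℝ)))] with y' hy'
    rw [aux_pdx_rpow hA hpos c k x y' (by simpa using hy')]
    ring
  have hsnd := aux_hasFDerivAt_snd hA x y
  have hr : HasFDerivAt (fun y' => A x y' ^ (c - 1))
      (((c - 1) * A x y ^ (c - 1 - 1)) •
        ((fderiv ℝ (Function.uncurry A) (x, y)).comp (ContinuousLinearMap.inr ℝ _ _))) y :=
    (Real.hasDerivAt_rpow_const (x := A x y) (p := c - 1)
      (Or.inl (hpos x y hy).ne')).comp_hasFDerivAt y hsnd
  have hq : HasFDerivAt (fun y' => pdx A k x y')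
      (fderiv ℝ (fun y' => pdx A k x y') y) y := (aux_q_diff hA k x y).hasFDerivAt
  have hprod : HasFDerivAt (fun y' => c * (A x y' ^ (c - 1) * pdx A k x y')) _ y :=
    ((hr.mul hq).const_mul c)
  rw [pdy, hev.fderiv_eq, hprod.fderiv]
  have h1 : pdy A l x y
      = ((fderiv ℝ (Function.uncurry A) (x, y)).comp (ContinuousLinearMap.inr ℝ _ _))
        (Pi.single l 1) := by
    rw [pdy, hsnd.fderiv]
  have h2 : pdy (pdx A k) l x y
      = fderiv ℝ (fun y' => pdx A k x y') y (Pi.single l 1) := rfl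
  simp only [ContinuousLinearMap.coe_smul', Pi.smul_apply, smul_eq_mul,
    ContinuousLinearMap.add_apply]
  rw [h2, ← h1]
  ring

end Aux

/-- Corollary 3.2: the m-th root metric `F = A^{1/m}` is locally dually flat iff
`A_{x^l} = (1/(2A))[(2/m - 1)A_lA₀ + A A_{0l}]`. -/
theorem dually_flat_mth_root {n m : ℕ} (hm : 2 ≤ m)
    (A : (Fin n → ℝ) → (Fin n → ℝ) → ℝ)
    (hA : ContDiff ℝ (⊤ : ℕ∞) (Function.uncurry A))
    (hAhom : ∀ (x : Fin n → ℝ) (t : ℝ) (y : Fin n → ℝ), A x (t • y) = t ^ m * A x y)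
    (hpos : ∀ x y, y ≠ 0 → 0 < A x y) :
    (∀ x y, y ≠ 0 → ∀ l,
        ∑ k, y k * pdy (pdx (fun x' y' => A x' y' ^ ((2 : ℝ) / m)) k) l x y
          = 2 * pdx (fun x' y' => A x' y' ^ ((2 : ℝ) / m)) l x y)
    ↔ (∀ x y, y ≠ 0 → ∀ l,
        pdx A l x y = (1 / (2 * A x y)) *
          (((2 / (m : ℝ)) - 1) * pdy A l x y * (∑ i, y i * pdx A i x y)
            + A x y * (∑ k, y k * pdy (pdx A k) l x y))) := by
  refine forall_congr' fun x => forall_congr' fun y => imp_congr_right fun hy =>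
    forall_congr' fun l => ?_
  set c : ℝ := (2 : ℝ) / m with hc
  have hmpos : (0 : ℝ) < m := by
    have : (2 : ℝ) ≤ m := by exact_mod_cast hm
    linarith
  have hcpos : 0 < c := by positivity
  have ha : 0 < A x y := hpos x y hy
  set a : ℝ := A x y with hadef
  set P : ℝ := pdy A l x y
  set Q : ℝ := pdx A l x y
  set A₀ : ℝ := ∑ i, y i * pdx A i x y with hA0
  set S : ℝ := ∑ k, y k * pdy (pdx A k) l x y with hS
  have hB : (0 : ℝ) < a ^ (c - 1) := Real.rpow_pos_of_pos ha _
  have haa : a ^ (c - 1 - 1) = a ^ (c - 1) / a := by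
    rw [Real.rpow_sub ha, Real.rpow_one]
  -- rewrite the left side using derivative formulas
  have hL : ∑ k, y k * pdy (pdx (fun x' y' => A x' y' ^ ((2 : ℝ) / m)) k) l x y
      = c * (c - 1) * (a ^ (c - 1) / a) * P * A₀ + c * a ^ (c - 1) * S := by
    have : ∀ k, y k * pdy (pdx (fun x' y' => A x' y' ^ ((2 : ℝ) / m)) k) l x y
        = c * (c - 1) * (a ^ (c - 1) / a) * P * (y k * pdx A k x y)
          + c * a ^ (c - 1) * (y k * pdy (pdx A k) l x y) := by
      intro k
      rw [aux_pdy_pdx_rpow hA hpos ((2 : ℝ) / m) k l x y hy]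
      rw [← hc, ← hadef, haa]
      ring
    rw [Finset.sum_congr rfl fun k _ => this k, Finset.sum_add_distrib,
      ← Finset.mul_sum, ← Finset.mul_sum, ← hA0, ← hS]
  have hR : pdx (fun x' y' => A x' y' ^ ((2 : ℝ) / m)) l x y = c * a ^ (c - 1) * Q := by
    rw [aux_pdx_rpow hA hpos ((2 : ℝ) / m) l x y hy, ← hc, ← hadef]
  rw [hL, hR]
  -- now pure algebra
  have hane : a ≠ 0 := ha.ne'
  have hBne : a ^ (c - 1) ≠ 0 := hB.ne'
  have hcne : c ≠ 0 := hcpos.ne'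
  have h2a : (2 : ℝ) * a ≠ 0 := by positivity
  have hcb : c * a ^ (c - 1) / a ≠ 0 := by positivity
  have e1 : c * (c - 1) * (a ^ (c - 1) / a) * P * A₀ + c * a ^ (c - 1) * S
      = (c * a ^ (c - 1) / a) * ((c - 1) * P * A₀ + a * S) := by
    field_simp
  have e2 : 2 * (c * a ^ (c - 1) * Q) = (c * a ^ (c - 1) / a) * (2 * a * Q) := by
    field_simp
  rw [e1, e2, mul_right_inj' hcb, one_div, eq_inv_mul_iff_mul_eq₀ h2a, eq_comm]
end

section
/- Let F = A^{1/m} with fundamental tensor g_{ij} = (A^{2/m-2}/m²)[ m A A_{ij} + (2-m) A_i A_j ], and suppose the Hessian (A_{ij}) is invertible with inverse (A^{ij}). Then the inverse fundamental tensor is g^{ij} = A^{-2/m}[ m A A^{ij} + ((m-2)/(m-1)) y^i y^j ]. -/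
open BigOperators

set_option maxHeartbeats 1000000 in
/-- Inverse of the fundamental tensor of `F = A^{1/m}`:
if `g_{ij} = (A^{2/m-2}/m²)[mAA_{ij} + (2-m)A_iA_j]` and `(A^{ij})` is the inverse
of the Hessian `(A_{ij})`, then `g^{ij} = A^{-2/m}[mAA^{ij} + ((m-2)/(m-1))yⁱyʲ]`
satisfies `g^{ik}g_{kj} = δ^i_j`. -/
theorem inverse_fundamental_tensor {n m : ℕ} (hm : 2 ≤ m)
    (A : (Fin n → ℝ) → (Fin n → ℝ) → ℝ)
    (hA : ContDiff ℝ (⊤ : ℕ∞) (Function.uncurry A))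
    (hAhom : ∀ (x : Fin n → ℝ) (t : ℝ) (y : Fin n → ℝ), A x (t • y) = t ^ m * A x y)
    (x y : Fin n → ℝ) (hy : y ≠ 0) (hpos : 0 < A x y)
    (Ainv : Matrix (Fin n) (Fin n) ℝ)
    (hinv1 : (Matrix.of fun i j => pdy (pdy A i) j x y) * Ainv = 1)
    (hinv2 : Ainv * (Matrix.of fun i j => pdy (pdy A i) j x y) = 1) :
    (Matrix.of fun i j => A x y ^ (-(2 : ℝ) / m) *
        ((m : ℝ) * A x y * Ainv i j + (((m : ℝ) - 2) / ((m : ℝ) - 1)) * y i * y j)) *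
      (Matrix.of fun i j => (A x y ^ ((2 : ℝ) / m - 2) / (m : ℝ) ^ 2) *
        ((m : ℝ) * A x y * pdy (pdy A i) j x y
          + (2 - (m : ℝ)) * pdy A i x y * pdy A j x y)) = 1 := by
  have hf : ContDiff ℝ (⊤ : ℕ∞) (A x) := hA.comp (contDiff_const.prodMk contDiff_id)
  have hf' : ContDiff ℝ (⊤ : ℕ∞) (fderiv ℝ (A x)) := hf.fderiv_right (by simp)
  set f' : (Fin n → ℝ) → (Fin n → ℝ) →L[ℝ] ℝ := fderiv ℝ (A x) with hf'def
  set f'' : (Fin n → ℝ) →L[ℝ] (Fin n → ℝ) →L[ℝ] ℝ := fderiv ℝ f' y with hf''def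
  have heval : ∀ (L : (Fin n → ℝ) →L[ℝ] ℝ) (z : Fin n → ℝ),
      L z = ∑ k, z k * L (Pi.single k 1) := by
    intro L z
    conv_lhs => rw [← Finset.univ_sum_single z]
    rw [map_sum]
    refine Finset.sum_congr rfl fun k _ => ?_
    have : (Pi.single k (z k) : Fin n → ℝ) = z k • (Pi.single k (1:ℝ) : Fin n → ℝ) := by
      funext l; by_cases h : l = k <;> simp [Pi.single_apply, h]
    rw [this, map_smul, smul_eq_mul]
  have euler1 : ∀ z, f' z z = m * A x z := by
    intro z
    have h1 : HasDerivAt (fun t : ℝ => A x (t • z)) (f' z z) 1 := by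
      have h0 : HasFDerivAt (A x) (f' z) ((1:ℝ) • z) := by
        simpa using (hf.differentiable (by simp) z).hasFDerivAt
      have h2 : HasDerivAt (fun t : ℝ => t • z) z 1 := by
        simpa using (hasDerivAt_id (1:ℝ)).smul_const z
      have h4 := h0.comp_hasDerivAt (x := (1:ℝ)) h2
      exact h4
    have h3 : HasDerivAt (fun t : ℝ => t ^ m * A x z) (m * A x z) 1 := by
      simpa using (hasDerivAt_pow m (1:ℝ)).mul_const (A x z)
    have := h1.unique (by simpa only [hAhom x] using h3)
    linarith [this]
  have euler2 : ∀ v, f'' v y = ((m:ℝ) - 1) * f' y v := by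
    intro v
    have hg : fderiv ℝ (fun z => f' z z) y = (f' y) + f''.flip y := by
      rw [fderiv_clm_apply (hf'.differentiable (by simp) y) differentiableAt_fun_id]
      ext w; simp [hf''def]
    have hg2 : fderiv ℝ (fun z => f' z z) y = (m:ℝ) • f' y := by
      have : (fun z => f' z z) = fun z => (m:ℝ) * A x z := by
        funext z; exact euler1 z
      rw [this, fderiv_const_mul (hf.differentiable (by simp) y)]
    have := congrFun (congrArg DFunLike.coe (hg.symm.trans hg2)) v
    simp at this
    linarith [this]
  have hsymm : ∀ v w, f'' v w = f'' w v := by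
    intro v w
    exact second_derivative_symmetric (f := A x) (fun z => (hf.differentiable (by simp) z).hasFDerivAt)
      ((hf'.differentiable (by simp) y).hasFDerivAt) v w
  -- coordinate notation
  set a : Fin n → ℝ := fun i => f' y (Pi.single i 1) with ha
  set B : Fin n → Fin n → ℝ := fun i j => f'' (Pi.single j 1) (Pi.single i 1) with hBdef
  have hBpdy : ∀ i j, pdy (pdy A i) j x y = B i j := by
    intro i j
    show fderiv ℝ (fun y' => f' y' (Pi.single i 1)) y (Pi.single j 1) = _
    rw [fderiv_clm_apply (hf'.differentiable (by simp) y) (differentiableAt_const _)]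
    simp [hBdef, hf''def]
  have hapdy : ∀ i, pdy A i x y = a i := fun i => rfl
  have hm1 : ((m:ℝ) - 1) ≠ 0 := by
    have : (2:ℝ) ≤ (m:ℝ) := by exact_mod_cast hm
    intro h; linarith
  have hA0 : A x y ≠ 0 := ne_of_gt hpos
  -- sum identities
  have hS1 : ∀ i j, ∑ k, Ainv i k * B k j = if i = j then (1:ℝ) else 0 := by
    intro i j
    have := congrFun (congrFun hinv2 i) j
    rw [Matrix.mul_apply] at this
    simp only [Matrix.of_apply, hBpdy] at this
    rw [this, Matrix.one_apply]
  have hS4 : ∑ k, y k * a k = m * A x y := by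
    rw [← heval (f' y) y]; exact euler1 y
  have hS3 : ∀ j, ∑ k, y k * B k j = ((m:ℝ) - 1) * a j := by
    intro j
    have h1 : f'' (Pi.single j 1) y = ∑ k, y k * B k j := by
      rw [heval (f'' (Pi.single j 1)) y]
    rw [← h1]; exact euler2 (Pi.single j 1)
  have hS2a : ∀ k, ∑ l, y l * B k l = ((m:ℝ) - 1) * a k := by
    intro k
    have h1 : (f''.flip (Pi.single k 1)) y = ∑ l, y l * B k l := by
      rw [heval (f''.flip (Pi.single k 1)) y]
      simp [hBdef]
    have h2 : (f''.flip (Pi.single k 1)) y = f'' y (Pi.single k 1) := rfl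
    rw [← h1, h2, hsymm y (Pi.single k 1)]
    exact euler2 (Pi.single k 1)
  have hS2 : ∀ i, ∑ k, Ainv i k * a k = y i / ((m:ℝ) - 1) := by
    intro i
    have h1 : ((m:ℝ) - 1) * ∑ k, Ainv i k * a k = y i := by
      calc ((m:ℝ) - 1) * ∑ k, Ainv i k * a k
          = ∑ k, Ainv i k * (((m:ℝ) - 1) * a k) := by
            rw [Finset.mul_sum]; exact Finset.sum_congr rfl fun k _ => by ring
        _ = ∑ k, Ainv i k * ∑ l, y l * B k l := by
            exact Finset.sum_congr rfl fun k _ => by rw [hS2a k]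
        _ = ∑ l, y l * ∑ k, Ainv i k * B k l := by
            simp only [Finset.mul_sum]
            rw [Finset.sum_comm]
            exact Finset.sum_congr rfl fun l _ => Finset.sum_congr rfl fun k _ => by ring
        _ = ∑ l, y l * (if i = l then (1:ℝ) else 0) := by
            exact Finset.sum_congr rfl fun l _ => by rw [hS1 i l]
        _ = y i := by simp
    field_simp
    linarith [h1]
  -- the scalar prefactor
  have hpre : A x y ^ (-(2:ℝ)/(m:ℝ)) * (A x y ^ ((2:ℝ)/(m:ℝ) - 2) / (m:ℝ)^2)
      = 1 / ((m:ℝ)^2 * (A x y)^2) := by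
    have h1 : A x y ^ (-(2:ℝ)/(m:ℝ)) * A x y ^ ((2:ℝ)/(m:ℝ) - 2) = A x y ^ (-(2:ℝ)) := by
      rw [← Real.rpow_add hpos]; congr 1; ring
    have h2 : A x y ^ (-(2:ℝ)) = ((A x y)^2)⁻¹ := by
      rw [Real.rpow_neg hpos.le, show ((2:ℝ)) = ((2:ℕ):ℝ) by norm_num, Real.rpow_natCast]
    rw [← mul_div_assoc, h1, h2]
    rw [div_eq_div_iff (by positivity) (by positivity)]
    field_simp
  -- now the matrix computation
  ext i j
  rw [Matrix.mul_apply]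
  simp only [Matrix.of_apply, hBpdy, hapdy, Matrix.one_apply]
  set c1 : ℝ := A x y ^ (-(2:ℝ)/(m:ℝ)) with hc1
  set c2 : ℝ := A x y ^ ((2:ℝ)/(m:ℝ) - 2) / (m:ℝ)^2 with hc2
  set c : ℝ := ((m:ℝ) - 2) / ((m:ℝ) - 1) with hc
  have hsum : ∑ k, (c1 * ((m:ℝ) * A x y * Ainv i k + c * y i * y k)) *
        (c2 * ((m:ℝ) * A x y * B k j + (2 - (m:ℝ)) * a k * a j))
      = (c1*c2*((m:ℝ)*A x y)*((m:ℝ)*A x y)) * (∑ k, Ainv i k * B k j)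
        + (c1*c2*((m:ℝ)*A x y)*(2-(m:ℝ))*a j) * (∑ k, Ainv i k * a k)
        + (c1*c2*c*((m:ℝ)*A x y)*y i) * (∑ k, y k * B k j)
        + (c1*c2*c*(2-(m:ℝ))*(a j)*y i) * (∑ k, y k * a k) := by
    simp only [Finset.mul_sum, ← Finset.sum_add_distrib]
    exact Finset.sum_congr rfl fun k _ => by ring
  rw [hsum, hS1 i j, hS2 i, hS3 j, hS4]
  have hcc : c1 * c2 = 1 / ((m:ℝ)^2 * (A x y)^2) := hpre
  rw [hcc]
  have hm0 : ((m:ℝ)) ≠ 0 := by positivity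
  by_cases hij : i = j
  · rw [if_pos hij]
    rw [hc]
    field_simp
    ring
  · rw [if_neg hij]
    rw [hc]
    field_simp
    ring
end

section
/- Let F̄ = √(A^{2/m} + B̄) and F̃ = √(A^{2/m} + B̃) be two generalized m-th root metrics (with quadratic forms B̄ = b̄_{ij}(x)y^iy^j, B̃ = b̃_{ij}(x)y^iy^j), and suppose F̄ = e^α F̃ with α = α(x) not identically zero (non-isometry conformal change). Then the fundamental tensor of F = A^{1/m} satisfies g_{ij} = (1/(1 - e^{2α}))(e^{2α} b̃_{ij} - b̄_{ij}), which depends only on x; hence the Cartan torsion of F vanishes and F is Riemannian. -/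
open BigOperators

lemma pdy_quad {n : ℕ} (c : Fin n → Fin n → ℝ) (x y : Fin n → ℝ) (l : Fin n) :
    pdy (fun _ y' => ∑ i, ∑ j, c i j * y' i * y' j) l x y
      = (∑ j, c l j * y j) + ∑ i, c i l * y i := by
  have hp : ∀ i : Fin n, HasFDerivAt (fun y' : Fin n → ℝ => y' i)
      (ContinuousLinearMap.proj i : (Fin n → ℝ) →L[ℝ] ℝ) y :=
    fun i => by exact
      (ContinuousLinearMap.proj (R := ℝ) (φ := fun _ : Fin n => ℝ) i).hasFDerivAt (x := y)
  have h : HasFDerivAt (fun y' : Fin n → ℝ => ∑ i, ∑ j, c i j * y' i * y' j)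
      (∑ i, ∑ j, c i j • (y i • (ContinuousLinearMap.proj j : (Fin n → ℝ) →L[ℝ] ℝ)
        + y j • (ContinuousLinearMap.proj i : (Fin n → ℝ) →L[ℝ] ℝ))) y := by
    apply HasFDerivAt.fun_sum; intro i _
    apply HasFDerivAt.fun_sum; intro j _
    have := ((hp i).mul (hp j)).const_mul (c i j)
    simpa [mul_assoc] using this
  unfold pdy
  rw [h.fderiv]
  simp [ContinuousLinearMap.sum_apply, Pi.single_apply, mul_add, mul_ite,
    Finset.sum_add_distrib, Finset.sum_ite_eq', smul_eq_mul]
  exact add_comm _ _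

lemma pdy_lin {n : ℕ} (d e : Fin n → ℝ) (x y : Fin n → ℝ) (k : Fin n) :
    pdy (fun _ y' => (∑ j, d j * y' j) + ∑ i, e i * y' i) k x y = d k + e k := by
  have hp : ∀ i : Fin n, HasFDerivAt (fun y' : Fin n → ℝ => y' i)
      (ContinuousLinearMap.proj i : (Fin n → ℝ) →L[ℝ] ℝ) y :=
    fun i => by exact
      (ContinuousLinearMap.proj (R := ℝ) (φ := fun _ : Fin n => ℝ) i).hasFDerivAt (x := y)
  have h : HasFDerivAt (fun y' : Fin n → ℝ => (∑ j, d j * y' j) + ∑ i, e i * y' i)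
      ((∑ j, d j • (ContinuousLinearMap.proj j : (Fin n → ℝ) →L[ℝ] ℝ))
        + ∑ i, e i • (ContinuousLinearMap.proj i : (Fin n → ℝ) →L[ℝ] ℝ)) y := by
    apply HasFDerivAt.add
    · apply HasFDerivAt.fun_sum; intro j _; exact (hp j).const_mul (d j)
    · apply HasFDerivAt.fun_sum; intro i _; exact (hp i).const_mul (e i)
  unfold pdy
  rw [h.fderiv]
  simp [ContinuousLinearMap.sum_apply, Pi.single_apply, mul_ite,
    Finset.sum_ite_eq', smul_eq_mul]

lemma pdy_const {n : ℕ} (h : (Fin n → ℝ) → ℝ) (x y : Fin n → ℝ) (k : Fin n) :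
    pdy (fun x' _ => h x') k x y = 0 := by
  unfold pdy
  rw [fderiv_const_apply]
  rfl

/-- Theorem 5.1: if two generalized m-th root metrics `F̄ = √(A^{2/m}+B̄)` and
`F̃ = √(A^{2/m}+B̃)` are related by a non-isometry conformal change `F̄ = e^α F̃`, then
the fundamental tensor of `F = A^{1/m}` equals `(e^{2α}b̃_{ij} - b̄_{ij})/(1-e^{2α})`
(depending only on `x`); hence the Cartan torsion of `F` vanishes and `F` is Riemannian. -/
theorem conformal_generalized_mth_root_riemannian {n m : ℕ} (hm : 2 ≤ m)
    (A : (Fin n → ℝ) → (Fin n → ℝ) → ℝ)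
    (bbar btilde : (Fin n → ℝ) → Fin n → Fin n → ℝ)
    (hbbarsym : ∀ x i j, bbar x i j = bbar x j i)
    (hbtildesym : ∀ x i j, btilde x i j = btilde x j i)
    (hA : ContDiff ℝ (⊤ : ℕ∞) (Function.uncurry A))
    (hAhom : ∀ (x : Fin n → ℝ) (t : ℝ) (y : Fin n → ℝ), A x (t • y) = t ^ m * A x y)
    (hpos : ∀ x y, y ≠ 0 → 0 < A x y)
    (hbarpos : ∀ x y, y ≠ 0 →
      0 < A x y ^ ((2 : ℝ) / m) + ∑ i, ∑ j, bbar x i j * y i * y j)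
    (htildepos : ∀ x y, y ≠ 0 →
      0 < A x y ^ ((2 : ℝ) / m) + ∑ i, ∑ j, btilde x i j * y i * y j)
    (α : (Fin n → ℝ) → ℝ) (hα : ∀ x, α x ≠ 0)
    (hconf : ∀ x y, y ≠ 0 →
      Real.sqrt (A x y ^ ((2 : ℝ) / m) + ∑ i, ∑ j, bbar x i j * y i * y j)
        = Real.exp (α x) *
          Real.sqrt (A x y ^ ((2 : ℝ) / m) + ∑ i, ∑ j, btilde x i j * y i * y j)) :
    (∀ x y, y ≠ 0 → ∀ i j,
      (1 / 2) * pdy (pdy (fun x' y' => A x' y' ^ ((2 : ℝ) / m)) i) j x y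
        = (1 / (1 - Real.exp (2 * α x))) *
            (Real.exp (2 * α x) * btilde x i j - bbar x i j)) ∧
    (∀ x y, y ≠ 0 → ∀ i j k,
      pdy (pdy (pdy (fun x' y' => A x' y' ^ ((2 : ℝ) / m)) i) j) k x y = 0) := by
  obtain ⟨c, hc⟩ : ∃ c : (Fin n → ℝ) → Fin n → Fin n → ℝ, c = fun x i j =>
      (1 / (1 - Real.exp (2 * α x))) * (Real.exp (2 * α x) * btilde x i j - bbar x i j) :=
    ⟨_, rfl⟩
  have csymm : ∀ x i j, c x i j = c x j i := by
    intro x i j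
    simp only [hc]
    rw [hbbarsym, hbtildesym]
  -- the key algebraic identity: A^{2/m} is a quadratic form in y
  have hQ : ∀ x y, A x y ^ ((2 : ℝ) / m) = ∑ i, ∑ j, c x i j * y i * y j := by
    intro x y
    simp only [hc]
    set E := Real.exp (2 * α x) with hEdef
    have hE1 : E ≠ 1 := by
      intro h
      rw [hEdef, Real.exp_eq_one_iff] at h
      exact hα x (by linarith)
    have hE : 1 - E ≠ 0 := sub_ne_zero_of_ne fun h => hE1 h.symm
    set Bb := ∑ i, ∑ j, bbar x i j * y i * y j with hBb
    set Bt := ∑ i, ∑ j, btilde x i j * y i * y j with hBt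
    have hkey : A x y ^ ((2 : ℝ) / m) + Bb = E * (A x y ^ ((2 : ℝ) / m) + Bt) := by
      by_cases hy : y = 0
      · have hA0 : A x 0 = 0 := by
          have := hAhom x 0 0
          simpa [zero_pow (by omega : m ≠ 0)] using this
        have h2m : ((2 : ℝ) / m) ≠ 0 := by
          have : (0:ℝ) < (m:ℝ) := by exact_mod_cast (by omega : 0 < m)
          positivity
        subst hy
        simp [hBb, hBt, hA0, Real.zero_rpow h2m]
      · have hc' := hconf x y hy
        have hP := hbarpos x y hy
        have hQ' := htildepos x y hy
        have hsq := congrArg (fun t => t ^ 2) hc'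
        simp only [mul_pow, Real.sq_sqrt hP.le, Real.sq_sqrt hQ'.le] at hsq
        have e2 : Real.exp (α x) ^ 2 = E := by
          rw [hEdef, sq, ← Real.exp_add]; ring_nf
        rw [hBb, hBt, hsq, e2]
    have hsolve : A x y ^ ((2 : ℝ) / m) = 1 / (1 - E) * (E * Bt - Bb) := by
      field_simp
      linarith [hkey]
    have hexp : ∑ i, ∑ j, (1 / (1 - E)) * (E * btilde x i j - bbar x i j) * y i * y j
        = (1 / (1 - E)) * (E * Bt - Bb) := by
      rw [hBt, hBb, Finset.mul_sum, ← Finset.sum_sub_distrib, Finset.mul_sum]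
      refine Finset.sum_congr rfl fun i _ => ?_
      rw [Finset.mul_sum, ← Finset.sum_sub_distrib, Finset.mul_sum]
      refine Finset.sum_congr rfl fun j _ => ?_
      ring
    rw [hsolve, ← hexp]
  have hQfun : (fun x' y' => A x' y' ^ ((2 : ℝ) / m))
      = fun x' y' => ∑ i, ∑ j, c x' i j * y' i * y' j :=
    funext fun x' => funext fun y' => hQ x' y'
  have h1 : ∀ i : Fin n, pdy (fun x' y' => A x' y' ^ ((2 : ℝ) / m)) i
      = fun x y => (∑ j, c x i j * y j) + ∑ i', c x i' i * y i' := by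
    intro i
    funext x y
    have hfun : (fun y' => A x y' ^ ((2 : ℝ) / m))
        = fun y' => ∑ i', ∑ j', c x i' j' * y' i' * y' j' := funext (hQ x)
    have heq : pdy (fun x' y' => A x' y' ^ ((2 : ℝ) / m)) i x y
        = pdy (fun _ y' => ∑ i', ∑ j', c x i' j' * y' i' * y' j') i x y := by
      unfold pdy
      show fderiv ℝ (fun y' => A x y' ^ ((2 : ℝ) / m)) y (Pi.single i 1)
        = fderiv ℝ (fun y' => ∑ i', ∑ j', c x i' j' * y' i' * y' j') y (Pi.single i 1)
      rw [hfun]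
    rw [heq]
    exact pdy_quad (c x) x y i
  have h2 : ∀ i j : Fin n, pdy (pdy (fun x' y' => A x' y' ^ ((2 : ℝ) / m)) i) j
      = fun x _ => c x i j + c x j i := by
    intro i j
    rw [h1 i]
    funext x y
    exact pdy_lin (fun j' => c x i j') (fun i' => c x i' i) x y j
  constructor
  · intro x y _ i j
    rw [h2 i j]
    show (1 / 2) * (c x i j + c x j i) = (1 / (1 - Real.exp (2 * α x))) *
      (Real.exp (2 * α x) * btilde x i j - bbar x i j)
    have hcij : c x i j = (1 / (1 - Real.exp (2 * α x))) *
        (Real.exp (2 * α x) * btilde x i j - bbar x i j) := by rw [hc]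
    rw [← hcij, ← csymm x i j]
    ring
  · intro x y _ i j k
    rw [h2 i j]
    exact pdy_const (fun x' => c x' i j + c x' j i) x y k
end

section
/- Let F̄ = √(A^{2/m} + B̄) and F̃ = √(A^{2/m} + B̃) be generalized m-th root metrics such that F = A^{1/m} is not Riemannian (its fundamental tensor depends nontrivially on y). If F̄ is conformal to F̃, i.e., F̄ = e^{α(x)} F̃, then α = 0 and B̄ = B̃, hence F̄ = F̃. -/
open BigOperators

open ContinuousLinearMap in
lemma quad_fderiv_apply {n : ℕ} (d : Fin n → Fin n → ℝ) (y : Fin n → ℝ) (l : Fin n) :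
    fderiv ℝ (fun y : Fin n → ℝ => ∑ i, ∑ j, d i j * y i * y j) y (Pi.single l 1)
      = (∑ i, d i l * y i) + (∑ j, d l j * y j) := by
  have h : HasFDerivAt (fun y : Fin n → ℝ => ∑ i, ∑ j, d i j * y i * y j)
      (∑ i, ∑ j, ((d i j * y i) • (proj j : (Fin n → ℝ) →L[ℝ] ℝ)
        + y j • (d i j • (proj i : (Fin n → ℝ) →L[ℝ] ℝ)))) y := by
    apply HasFDerivAt.fun_sum; intro i _
    apply HasFDerivAt.fun_sum; intro j _
    have h0 : HasFDerivAt (fun y : Fin n → ℝ => y i)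
        (proj i : (Fin n → ℝ) →L[ℝ] ℝ) y := (proj i : (Fin n → ℝ) →L[ℝ] ℝ).hasFDerivAt
    have h1 : HasFDerivAt (fun y : Fin n → ℝ => d i j * y i)
        (d i j • (proj i : (Fin n → ℝ) →L[ℝ] ℝ)) y := h0.const_mul _
    have h2 : HasFDerivAt (fun y : Fin n → ℝ => y j)
        (proj j : (Fin n → ℝ) →L[ℝ] ℝ) y := (proj j : (Fin n → ℝ) →L[ℝ] ℝ).hasFDerivAt
    exact h1.mul h2
  rw [h.fderiv]
  simp [ContinuousLinearMap.sum_apply, Pi.single_apply, Finset.mul_sum,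
    Finset.sum_add_distrib, mul_ite, mul_comm]

open ContinuousLinearMap in
lemma lin_fderiv_apply {n : ℕ} (e : Fin n → ℝ) (y : Fin n → ℝ) (k : Fin n) :
    fderiv ℝ (fun y : Fin n → ℝ => ∑ i, e i * y i) y (Pi.single k 1) = e k := by
  have h : HasFDerivAt (fun y : Fin n → ℝ => ∑ i, e i * y i)
      (∑ i, e i • (proj i : (Fin n → ℝ) →L[ℝ] ℝ)) y := by
    apply HasFDerivAt.fun_sum; intro i _
    exact ((proj i : (Fin n → ℝ) →L[ℝ] ℝ).hasFDerivAt).const_mul _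
  rw [h.fderiv]
  simp [ContinuousLinearMap.sum_apply, Pi.single_apply]

/-- `pdy` only depends on the values of `f x` near `y` (here: on `{y ≠ 0}`). -/
lemma pdy_congr {n : ℕ} {f g : (Fin n → ℝ) → (Fin n → ℝ) → ℝ} {x y : Fin n → ℝ}
    (h : ∀ y' ≠ (0 : Fin n → ℝ), f x y' = g x y') (hy : y ≠ 0) (l : Fin n) :
    pdy f l x y = pdy g l x y := by
  unfold pdy
  have hev : f x =ᶠ[nhds y] g x := by
    have hopen : IsOpen {y' : Fin n → ℝ | y' ≠ 0} := isOpen_ne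
    filter_upwards [hopen.mem_nhds hy] with y' hy' using h y' hy'
  rw [hev.fderiv_eq]

/-- The third fiber derivative of a quadratic form vanishes. -/
lemma pdy3_quad {n : ℕ} (d : Fin n → Fin n → ℝ) (i j k : Fin n) (x y : Fin n → ℝ) :
    pdy (pdy (pdy (fun _ y : Fin n → ℝ => ∑ i', ∑ j', d i' j' * y i' * y j') i) j) k x y
      = 0 := by
  have h1 : pdy (fun _ y : Fin n → ℝ => ∑ i', ∑ j', d i' j' * y i' * y j') i
      = fun _ y => ∑ l, (d l i + d i l) * y l := by
    funext x' y'
    unfold pdy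
    rw [quad_fderiv_apply, ← Finset.sum_add_distrib]
    congr 1; funext l; ring
  rw [h1]
  have h2 : pdy (fun _ y : Fin n → ℝ => ∑ l, (d l i + d i l) * y l) j
      = fun _ _ => d j i + d i j := by
    funext x' y'
    unfold pdy
    rw [lin_fderiv_apply]
  rw [h2]
  unfold pdy
  simp [fderiv_const]

lemma quad_eval_pair {n : ℕ} (b : Fin n → Fin n → ℝ) (k l : Fin n) :
    (∑ i, ∑ j, b i j * (Pi.single k 1 + Pi.single l 1 : Fin n → ℝ) i
      * (Pi.single k 1 + Pi.single l 1 : Fin n → ℝ) j)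
    = b k k + b k l + b l k + b l l := by
  simp [Pi.single_apply, mul_add, add_mul, Finset.sum_add_distrib, mul_ite, ite_mul,
    Finset.sum_ite_eq, Finset.sum_ite_eq']
  ring

lemma pair_ne_zero {n : ℕ} (k l : Fin n) :
    (Pi.single k 1 + Pi.single l 1 : Fin n → ℝ) ≠ 0 := by
  intro h
  have hk := congrFun h k
  simp only [Pi.add_apply, Pi.single_apply, Pi.zero_apply, if_pos rfl] at hk
  by_cases hkl : k = l <;> simp [hkl] at hk <;> linarith

/-- Corollary 5.2: if `F = A^{1/m}` is not Riemannian (its Cartan torsion is nonzero)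
and the generalized m-th root metrics `F̄ = √(A^{2/m}+B̄)`, `F̃ = √(A^{2/m}+B̃)` are
conformal, `F̄ = e^{α(x)}F̃`, then `α = 0` and `B̄ = B̃`, hence `F̄ = F̃`. -/
theorem conformal_nonriemannian_implies_equal {n m : ℕ} (hm : 2 ≤ m)
    (A : (Fin n → ℝ) → (Fin n → ℝ) → ℝ)
    (bbar btilde : (Fin n → ℝ) → Fin n → Fin n → ℝ)
    (hbbarsym : ∀ x i j, bbar x i j = bbar x j i)
    (hbtildesym : ∀ x i j, btilde x i j = btilde x j i)
    (hA : ContDiff ℝ (⊤ : ℕ∞) (Function.uncurry A))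
    (hAhom : ∀ (x : Fin n → ℝ) (t : ℝ) (y : Fin n → ℝ), A x (t • y) = t ^ m * A x y)
    (hpos : ∀ x y, y ≠ 0 → 0 < A x y)
    (hbarpos : ∀ x y, y ≠ 0 →
      0 < A x y ^ ((2 : ℝ) / m) + ∑ i, ∑ j, bbar x i j * y i * y j)
    (htildepos : ∀ x y, y ≠ 0 →
      0 < A x y ^ ((2 : ℝ) / m) + ∑ i, ∑ j, btilde x i j * y i * y j)
    (hnonriem : ∀ x, ∃ y, y ≠ 0 ∧ ∃ i j k,
      pdy (pdy (pdy (fun x' y' => A x' y' ^ ((2 : ℝ) / m)) i) j) k x y ≠ 0)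
    (α : (Fin n → ℝ) → ℝ)
    (hconf : ∀ x y, y ≠ 0 →
      Real.sqrt (A x y ^ ((2 : ℝ) / m) + ∑ i, ∑ j, bbar x i j * y i * y j)
        = Real.exp (α x) *
          Real.sqrt (A x y ^ ((2 : ℝ) / m) + ∑ i, ∑ j, btilde x i j * y i * y j)) :
    (∀ x, α x = 0) ∧ (∀ x i j, bbar x i j = btilde x i j) ∧
    (∀ x y, Real.sqrt (A x y ^ ((2 : ℝ) / m) + ∑ i, ∑ j, bbar x i j * y i * y j)
      = Real.sqrt (A x y ^ ((2 : ℝ) / m) + ∑ i, ∑ j, btilde x i j * y i * y j)) := by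
  -- squared conformal relation
  have key : ∀ x y, y ≠ 0 →
      A x y ^ ((2 : ℝ) / m) + ∑ i, ∑ j, bbar x i j * y i * y j
        = Real.exp (α x) ^ 2 *
          (A x y ^ ((2 : ℝ) / m) + ∑ i, ∑ j, btilde x i j * y i * y j) := by
    intro x y hy
    have h1 := hbarpos x y hy
    have h2 := htildepos x y hy
    have h3 := hconf x y hy
    calc A x y ^ ((2 : ℝ) / m) + ∑ i, ∑ j, bbar x i j * y i * y j
        = Real.sqrt (A x y ^ ((2 : ℝ) / m) + ∑ i, ∑ j, bbar x i j * y i * y j) ^ 2 := by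
          rw [Real.sq_sqrt h1.le]
      _ = (Real.exp (α x) *
            Real.sqrt (A x y ^ ((2 : ℝ) / m) + ∑ i, ∑ j, btilde x i j * y i * y j)) ^ 2 := by
          rw [h3]
      _ = Real.exp (α x) ^ 2 *
            (A x y ^ ((2 : ℝ) / m) + ∑ i, ∑ j, btilde x i j * y i * y j) := by
          rw [mul_pow, Real.sq_sqrt h2.le]
  have halpha : ∀ x, α x = 0 := by
    intro x
    by_contra hax
    obtain ⟨y0, hy0, i, j, k, hne⟩ := hnonriem x
    set c := Real.exp (α x) ^ 2 with hc
    have hc1 : c ≠ 1 := by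
      intro h
      have h2 : Real.exp (2 * α x) = 1 := by
        rw [two_mul, Real.exp_add, ← sq]; exact h
      rw [Real.exp_eq_one_iff] at h2
      exact hax (by linarith)
    have h1c : (1 : ℝ) - c ≠ 0 := sub_ne_zero.mpr (Ne.symm hc1)
    set d : Fin n → Fin n → ℝ :=
      fun i' j' => (c * btilde x i' j' - bbar x i' j') / (1 - c) with hd
    -- on `y ≠ 0`, `A^{2/m}` agrees with the quadratic form with matrix `d`
    have hq : ∀ y' ≠ (0 : Fin n → ℝ),
        A x y' ^ ((2 : ℝ) / m) = ∑ i', ∑ j', d i' j' * y' i' * y' j' := by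
      intro y hy
      have hsum : (∑ i', ∑ j', d i' j' * y i' * y j')
          = (c * (∑ i', ∑ j', btilde x i' j' * y i' * y j')
              - ∑ i', ∑ j', bbar x i' j' * y i' * y j') / (1 - c) := by
        rw [Finset.mul_sum, ← Finset.sum_sub_distrib, Finset.sum_div]
        refine Finset.sum_congr rfl fun i' _ => ?_
        rw [Finset.mul_sum, ← Finset.sum_sub_distrib, Finset.sum_div]
        refine Finset.sum_congr rfl fun j' _ => ?_
        simp only [hd]
        field_simp
      rw [hsum, eq_div_iff h1c]
      linear_combination key x y hy
    -- hence the third fiber derivative vanishes, a contradiction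
    apply hne
    have e1 : ∀ y' ≠ (0 : Fin n → ℝ),
        pdy (fun x' y' => A x' y' ^ ((2 : ℝ) / m)) i x y'
          = pdy (fun _ y : Fin n → ℝ => ∑ i', ∑ j', d i' j' * y i' * y j') i x y' :=
      fun y' hy' => pdy_congr hq hy' i
    have e2 : ∀ y' ≠ (0 : Fin n → ℝ),
        pdy (pdy (fun x' y' => A x' y' ^ ((2 : ℝ) / m)) i) j x y'
          = pdy (pdy (fun _ y : Fin n → ℝ => ∑ i', ∑ j', d i' j' * y i' * y j') i) j x y' :=
      fun y' hy' => pdy_congr e1 hy' j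
    have e3 := pdy_congr e2 hy0 k
    rw [e3, pdy3_quad]
  -- with α ≡ 0 the quadratic parts agree on nonzero vectors
  have key2 : ∀ (x y : Fin n → ℝ), y ≠ 0 →
      (∑ i, ∑ j, bbar x i j * y i * y j) = ∑ i, ∑ j, btilde x i j * y i * y j := by
    intro x y hy
    have h := key x y hy
    rw [halpha x] at h
    simp only [Real.exp_zero, one_pow, one_mul] at h
    linarith
  have hb : ∀ x i j, bbar x i j = btilde x i j := by
    intro x i j
    have hii := key2 x _ (pair_ne_zero i i)
    have hjj := key2 x _ (pair_ne_zero j j)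
    have hij := key2 x _ (pair_ne_zero i j)
    rw [quad_eval_pair, quad_eval_pair] at hii hjj hij
    have hsb := hbbarsym x i j
    have hst := hbtildesym x i j
    linarith
  refine ⟨halpha, hb, fun x y => ?_⟩
  have : (∑ i, ∑ j, bbar x i j * y i * y j) = ∑ i, ∑ j, btilde x i j * y i * y j := by
    refine Finset.sum_congr rfl fun i _ => Finset.sum_congr rfl fun j _ => ?_
    rw [hb]
  rw [this]
end

section
/- If a generalized m-th root metric F̄ = √(A^{2/m} + B) is conformal (F̄ = e^{α(x)} F) to the m-th root metric F = A^{1/m} with α not identically zero, then both F and F̄ are Riemannian metrics. -/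
open BigOperators

noncomputable abbrev prj {n : ℕ} (i : Fin n) : (Fin n → ℝ) →L[ℝ] ℝ :=
  ContinuousLinearMap.proj (R := ℝ) (φ := fun _ : Fin n => ℝ) i

lemma fd1 {n : ℕ} (bm : Fin n → Fin n → ℝ) (c : ℝ) (i : Fin n) (y : Fin n → ℝ) :
    fderiv ℝ (fun y' : Fin n → ℝ => c * ∑ p, ∑ q, bm p q * y' p * y' q) y (Pi.single i 1)
      = c * ((∑ p, bm p i * y p) + ∑ q, bm i q * y q) := by
  have h : HasFDerivAt (fun y' : Fin n → ℝ => c * ∑ p, ∑ q, bm p q * y' p * y' q)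
      (c • ∑ p : Fin n, ∑ q : Fin n,
        ((bm p q * y p) • prj q + y q • (bm p q • prj p))) y := by
    refine HasFDerivAt.const_mul (HasFDerivAt.fun_sum fun p _ => HasFDerivAt.fun_sum fun q _ => ?_) c
    exact ((hasFDerivAt_apply p y).const_mul (bm p q)).mul (hasFDerivAt_apply q y)
  rw [h.fderiv]
  simp [ContinuousLinearMap.sum_apply, Pi.single_apply, Finset.mul_sum, mul_comm,
    Finset.sum_ite_eq, Finset.sum_ite_eq', mul_ite, mul_add]
  rw [Finset.sum_congr rfl (fun x _ => Finset.sum_add_distrib), Finset.sum_add_distrib]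
  simp [Finset.sum_ite_eq, Finset.sum_ite_eq']

lemma fd2 {n : ℕ} (bm : Fin n → Fin n → ℝ) (c : ℝ) (i j : Fin n) (y : Fin n → ℝ) :
    fderiv ℝ (fun y' : Fin n → ℝ => c * ((∑ p, bm p i * y' p) + ∑ q, bm i q * y' q)) y
      (Pi.single j 1) = c * (bm j i + bm i j) := by
  have h : HasFDerivAt (fun y' : Fin n → ℝ => c * ((∑ p, bm p i * y' p) + ∑ q, bm i q * y' q))
      (c • ((∑ p : Fin n, bm p i • prj p) + ∑ q : Fin n, bm i q • prj q)) y := by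
    refine HasFDerivAt.const_mul (HasFDerivAt.add ?_ ?_) c
    · exact HasFDerivAt.fun_sum fun p _ => (hasFDerivAt_apply p y).const_mul (bm p i)
    · exact HasFDerivAt.fun_sum fun q _ => (hasFDerivAt_apply q y).const_mul (bm i q)
  rw [h.fderiv]
  simp [ContinuousLinearMap.sum_apply, Pi.single_apply, Finset.sum_ite_eq, Finset.sum_ite_eq',
    mul_ite, mul_add]

lemma quad_third {n : ℕ} (c : (Fin n → ℝ) → ℝ) (bm : (Fin n → ℝ) → Fin n → Fin n → ℝ)
    (i j k : Fin n) (x y : Fin n → ℝ) :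
    pdy (pdy (pdy (fun x' y' => c x' * ∑ p, ∑ q, bm x' p q * y' p * y' q) i) j) k x y = 0 := by
  have s1 : pdy (fun x' y' => c x' * ∑ p, ∑ q, bm x' p q * y' p * y' q) i x
      = fun y'' => c x * ((∑ p, bm x p i * y'' p) + ∑ q, bm x i q * y'' q) := by
    funext y''
    exact fd1 (bm x) (c x) i y''
  have s2 : pdy (pdy (fun x' y' => c x' * ∑ p, ∑ q, bm x' p q * y' p * y' q) i) j x
      = fun _ => c x * (bm x j i + bm x i j) := by
    funext y'
    show fderiv ℝ (pdy (fun x' y' => c x' * ∑ p, ∑ q, bm x' p q * y' p * y' q) i x) y'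
      (Pi.single j 1) = _
    rw [s1]
    exact fd2 (bm x) (c x) i j y'
  show fderiv ℝ (pdy (pdy (fun x' y' => c x' * ∑ p, ∑ q, bm x' p q * y' p * y' q) i) j x) y
      (Pi.single k 1) = 0
  rw [s2, fderiv_fun_const]
  simp

/-- Theorem 1.3: if the generalized m-th root metric `F̄ = √(A^{2/m}+B)` is conformal,
`F̄ = e^{α(x)}F`, to the m-th root metric `F = A^{1/m}` with `α` a non-isometry
(`α ≠ 0`), then both `F` and `F̄` are Riemannian (their Cartan torsions vanish). -/
theorem conformal_to_mth_root_riemannian {n m : ℕ} (hm : 2 ≤ m)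
    (A : (Fin n → ℝ) → (Fin n → ℝ) → ℝ)
    (b : (Fin n → ℝ) → Fin n → Fin n → ℝ)
    (hbsym : ∀ x i j, b x i j = b x j i)
    (hA : ContDiff ℝ (⊤ : ℕ∞) (Function.uncurry A))
    (hAhom : ∀ (x : Fin n → ℝ) (t : ℝ) (y : Fin n → ℝ), A x (t • y) = t ^ m * A x y)
    (hpos : ∀ x y, y ≠ 0 → 0 < A x y)
    (hbarpos : ∀ x y, y ≠ 0 →
      0 < A x y ^ ((2 : ℝ) / m) + ∑ i, ∑ j, b x i j * y i * y j)
    (α : (Fin n → ℝ) → ℝ) (hα : ∀ x, α x ≠ 0)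
    (hconf : ∀ x y, y ≠ 0 →
      Real.sqrt (A x y ^ ((2 : ℝ) / m) + ∑ i, ∑ j, b x i j * y i * y j)
        = Real.exp (α x) * A x y ^ ((1 : ℝ) / m)) :
    (∀ x y, y ≠ 0 → ∀ i j k,
      pdy (pdy (pdy (fun x' y' => A x' y' ^ ((2 : ℝ) / m)) i) j) k x y = 0) ∧
    (∀ x y, y ≠ 0 → ∀ i j k,
      pdy (pdy (pdy (fun x' y' =>
        A x' y' ^ ((2 : ℝ) / m) + ∑ p, ∑ q, b x' p q * y' p * y' q) i) j) k x y = 0) := by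
  set c : (Fin n → ℝ) → ℝ := fun x => (Real.exp (α x) ^ 2 - 1)⁻¹ with hc
  have hmR : (m : ℝ) ≠ 0 := by positivity
  have hexp : ∀ x, Real.exp (α x) ^ 2 - 1 ≠ 0 := by
    intro x h
    have h1 : Real.exp (α x) ^ 2 = 1 := by linarith
    have h2 : Real.exp (α x + α x) = 1 := by
      rw [Real.exp_add]; nlinarith
    have h3 : α x + α x = 0 := Real.exp_injective (by rw [h2, Real.exp_zero])
    exact hα x (by linarith)
  have hA0 : ∀ x, A x 0 = 0 := by
    intro x
    have := hAhom x 0 0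
    simpa [zero_pow (by omega : m ≠ 0)] using this
  have key : ∀ x y, A x y ^ ((2 : ℝ) / m) = c x * ∑ p, ∑ q, b x p q * y p * y q := by
    intro x y
    by_cases hy : y = 0
    · subst hy
      simp [hA0 x, Real.zero_rpow (by positivity : (2 : ℝ) / m ≠ 0)]
    · have h1 := hconf x y hy
      have hQ := hbarpos x y hy
      have hApos := hpos x y hy
      have hsq : A x y ^ ((2 : ℝ) / m) + ∑ p, ∑ q, b x p q * y p * y q
          = Real.exp (α x) ^ 2 * A x y ^ ((2 : ℝ) / m) := by
        have h2 : Real.sqrt (A x y ^ ((2 : ℝ) / m) + ∑ p, ∑ q, b x p q * y p * y q) ^ 2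
            = (Real.exp (α x) * A x y ^ ((1 : ℝ) / m)) ^ 2 := by rw [h1]
        rw [Real.sq_sqrt hQ.le] at h2
        rw [h2, mul_pow]
        congr 1
        rw [← Real.rpow_natCast (A x y ^ ((1 : ℝ) / m)) 2, ← Real.rpow_mul hApos.le]
        rw [one_div, div_eq_inv_mul]
        norm_num [mul_comm]
      have hE := hexp x
      have : ∑ p, ∑ q, b x p q * y p * y q
          = (Real.exp (α x) ^ 2 - 1) * A x y ^ ((2 : ℝ) / m) := by ring_nf; ring_nf at hsq; linarith
      rw [hc]
      field_simp
      linarith [this]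
  constructor
  · intro x y _ i j k
    have heq : (fun x' y' => A x' y' ^ ((2 : ℝ) / m))
        = fun x' y' => c x' * ∑ p, ∑ q, b x' p q * y' p * y' q := by
      funext x' y'; exact key x' y'
    rw [heq]
    exact quad_third c b i j k x y
  · intro x y _ i j k
    have heq : (fun x' y' => A x' y' ^ ((2 : ℝ) / m) + ∑ p, ∑ q, b x' p q * y' p * y' q)
        = fun x' y' => (c x' + 1) * ∑ p, ∑ q, b x' p q * y' p * y' q := by
      funext x' y'
      rw [key x' y']
      ring
    rw [heq]
    exact quad_third (fun x' => c x' + 1) b i j k x y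
end
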